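/- arXiv:1502.07203 — 6 statements merged into one kernel-verified Lean document; each statement's English description precedes it below -/
import Mathlib

section
/- Let α be an irrational real number, f ∈ ℚ[x] a nonzero polynomial, and q ∈ ℝ[x] a polynomial that has an irrational coefficient in some degree k ≥ 1. Then there exists d ≥ deg f such that the coefficient of x^d in α·f(x) + f(x)·q(x) is irrational. -/
/-!
Let `K ≥ 1` be the largest index at which `q` has an irrational coefficient and `n = deg f`.
The coefficient of `x^(n+K)` in `α f + f q` is `f_n q_K + ∑_{i<n} f_i q_{n+K-i}`: the term `α f_{n+K}`
vanishes since `K ≥ 1`, and every `q_{n+K-i}` with `i < n` is rational by maximality of `K`.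
So it is a nonzero rational multiple of the irrational `q_K` plus a rational number.
-/

open Polynomial

namespace Polynomial

variable {R : Type*} [Semiring R]

theorem exists_greatest_coeff_not_mem (S : Set R) (h0 : (0 : R) ∈ S) (p : R[X]) {k : ℕ}
    (hk : p.coeff k ∉ S) : ∃ K, k ≤ K ∧ p.coeff K ∉ S ∧ ∀ j, K < j → p.coeff j ∈ S := by
  classical
  have hk_le : k ≤ p.natDegree := by
    by_contra! h
    exact hk (p.coeff_eq_zero_of_natDegree_lt h ▸ h0)
  let P : ℕ → Prop := fun j => p.coeff j ∉ S
  refine ⟨Nat.findGreatest P p.natDegree, Nat.le_findGreatest hk_le hk,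
    Nat.findGreatest_spec (P := P) hk_le hk, fun j hj => ?_⟩
  by_cases hj_le : j ≤ p.natDegree
  · exact not_not.mp (Nat.findGreatest_is_greatest hj hj_le)
  · exact p.coeff_eq_zero_of_natDegree_lt (not_le.mp hj_le) ▸ h0

theorem exists_coeff_mul_natDegree_add_eq (S : Subsemiring R) {f q : R[X]} {K : ℕ}
    (hf : ∀ n, f.coeff n ∈ S) (hq : ∀ j, K < j → q.coeff j ∈ S) :
    ∃ s ∈ S, (f * q).coeff (f.natDegree + K) = f.leadingCoeff * q.coeff K + s := by
  classical
  set n := f.natDegree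
  have hmem : (n, K) ∈ Finset.HasAntidiagonal.antidiagonal (n + K) :=
    Finset.HasAntidiagonal.mem_antidiagonal.mpr rfl
  refine ⟨∑ x ∈ (Finset.HasAntidiagonal.antidiagonal (n + K)).erase (n, K),
      f.coeff x.1 * q.coeff x.2, S.sum_mem fun x hx => ?_, by rw [coeff_mul, ← Finset.add_sum_erase _ _ hmem]; rfl⟩
  obtain ⟨hne, hx⟩ := Finset.mem_erase.mp hx
  rw [Finset.HasAntidiagonal.mem_antidiagonal] at hx
  obtain ⟨i, j⟩ := x
  rcases lt_trichotomy i n with hi | rfl | hi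
  · exact S.mul_mem (hf i) (hq j (by simp only at hx; omega))
  · exact (hne (by simp only at hx; rw [show j = K by omega])).elim
  · simp [f.coeff_eq_zero_of_natDegree_lt hi, S.zero_mem]

end Polynomial

theorem polynomial_recurrence_coeff_lemma_general
    (α : ℝ) (f q : ℝ[X]) (hf0 : f ≠ 0)
    (hf : ∀ n, ∃ a : ℚ, f.coeff n = (a : ℝ))
    (hq : ∃ k, 1 ≤ k ∧ Irrational (q.coeff k)) :
    ∃ d, f.natDegree ≤ d ∧ Irrational ((C α * f + f * q).coeff d) := by
  let S := (Rat.castHom ℝ).rangeS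
  have hfS : ∀ n, f.coeff n ∈ S := fun n => (hf n).imp fun a ha => ha.symm
  obtain ⟨k, hk1, hk⟩ := hq
  obtain ⟨K, hkK, hK, hqS⟩ := exists_greatest_coeff_not_mem (S : Set ℝ) S.zero_mem q hk
  obtain ⟨_, ⟨r, rfl⟩, hcoeff⟩ := exists_coeff_mul_natDegree_add_eq S hfS hqS
  obtain ⟨c, hc⟩ := hf f.natDegree
  have hc0 : c ≠ 0 := by
    rintro rfl
    exact hf0 (leadingCoeff_eq_zero.mp (by simpa using hc))
  refine ⟨f.natDegree + K, Nat.le_add_right _ _, ?_⟩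
  have hfK : f.coeff (f.natDegree + K) = 0 := f.coeff_eq_zero_of_natDegree_lt (by omega)
  rw [coeff_add, coeff_C_mul, hfK, mul_zero, zero_add, hcoeff, leadingCoeff, hc]
  exact (Irrational.ratCast_mul hK hc0).add_ratCast r

theorem polynomial_recurrence_coeff_lemma
    (α : ℝ) (hα : Irrational α) (f q : ℝ[X]) (hf0 : f ≠ 0)
    (hf : ∀ n, ∃ a : ℚ, f.coeff n = (a : ℝ))
    (hq : ∃ k, 1 ≤ k ∧ Irrational (q.coeff k)) :
    ∃ d, f.natDegree ≤ d ∧ Irrational ((C α * f + f * q).coeff d) :=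
  polynomial_recurrence_coeff_lemma_general α f q hf0 hf hq
end

section
/- Let (X, 𝓑, μ) be a probability space, 𝓧₁, …, 𝓧ₗ sub-σ-algebras, and A ∈ 𝓑. Then ∫ 1_A · 𝔼(1_A|𝓧₁) ⋯ 𝔼(1_A|𝓧ₗ) dμ ≥ μ(A)^{l+1}. -/
/-! Write `g i = 𝔼(1_A | 𝓧ᵢ)`. Hölder's inequality on `A` with `l + 1` equal exponents, applied to
`∏ i, g i` and the `l` functions `1 / g i`, gives
`μ(A) ^ (l + 1) ≤ (∫_A ∏ i, g i) * ∏ i, ∫_A 1 / g i`.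
Since `1 / g i` is `𝓧ᵢ`-measurable, it may be integrated against `g i` instead of `1_A`, so
`∫_A 1 / g i = ∫ g i / g i ≤ 1`. The quotients cause no trouble: `g i > 0` a.e. on `A`, because
`μ(A ∩ {g i = 0}) = ∫_{g i = 0} g i = 0`. Working in `ℝ≥0∞` lets `1 / g i` be unbounded. -/

open scoped ENNReal

namespace MeasureTheory

variable {X : Type*} {m m0 : MeasurableSpace X} {μ : Measure X}

theorem lintegral_ofReal_condExp_mul (hm : m ≤ m0) [SigmaFinite (μ.trim hm)] {f : X → ℝ}
    (hf : Integrable f μ) (hf_nonneg : 0 ≤ᵐ[μ] f) {h : X → ℝ≥0∞} (hh : Measurable[m] h) :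
    ∫⁻ x, ENNReal.ofReal (μ[f | m] x) * h x ∂μ = ∫⁻ x, ENNReal.ofReal (f x) * h x ∂μ := by
  -- the densities `μ[f | m]` and `f` have the same integral over every `m`-measurable set
  have h_trim : (μ.withDensity fun x => ENNReal.ofReal (μ[f | m] x)).trim hm =
      (μ.withDensity fun x => ENNReal.ofReal (f x)).trim hm := by
    refine @Measure.ext X m _ _ fun s hs => ?_
    rw [trim_measurableSet_eq hm hs, trim_measurableSet_eq hm hs, withDensity_apply _ (hm s hs),
      withDensity_apply _ (hm s hs),
      ← ofReal_integral_eq_lintegral_ofReal integrable_condExp.integrableOn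
        (ae_restrict_of_ae (condExp_nonneg hf_nonneg)),
      ← ofReal_integral_eq_lintegral_ofReal hf.integrableOn (ae_restrict_of_ae hf_nonneg),
      setIntegral_condExp hm hf hs]
  have hh_meas : Measurable h := hh.mono hm le_rfl
  calc ∫⁻ x, ENNReal.ofReal (μ[f | m] x) * h x ∂μ
      = ∫⁻ x, h x ∂(μ.withDensity fun x => ENNReal.ofReal (μ[f | m] x)).trim hm := by
        rw [lintegral_trim hm hh, lintegral_withDensity_eq_lintegral_mul₀
          integrable_condExp.aemeasurable.ennreal_ofReal hh_meas.aemeasurable]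
        rfl
    _ = ∫⁻ x, ENNReal.ofReal (f x) * h x ∂μ := by
        rw [h_trim, lintegral_trim hm hh, lintegral_withDensity_eq_lintegral_mul₀
          hf.aemeasurable.ennreal_ofReal hh_meas.aemeasurable]
        rfl

theorem ae_pos_condExp_of_pos (hm : m ≤ m0) [SigmaFinite (μ.trim hm)] {f : X → ℝ}
    (hf : Integrable f μ) (hf_nonneg : 0 ≤ᵐ[μ] f) : ∀ᵐ x ∂μ, 0 < f x → 0 < μ[f | m] x := by
  set Z := {x | μ[f | m] x = 0}
  have hZ : MeasurableSet[m] Z :=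
    stronglyMeasurable_condExp.measurable (measurableSet_singleton 0)
  have h_null : ∫⁻ x, ENNReal.ofReal (f x) * Z.indicator (fun _ => (1 : ℝ≥0∞)) x ∂μ = 0 := by
    rw [← lintegral_ofReal_condExp_mul hm hf hf_nonneg (measurable_const.indicator hZ)]
    refine lintegral_eq_zero_of_ae_eq_zero (ae_of_all _ fun x => ?_)
    by_cases hx : x ∈ Z
    · simp [show μ[f | m] x = 0 from hx]
    · simp [hx]
  have h_meas :
      AEMeasurable (fun x => ENNReal.ofReal (f x) * Z.indicator (fun _ => (1 : ℝ≥0∞)) x) μ :=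
    hf.aemeasurable.ennreal_ofReal.mul ((measurable_const.indicator (hm Z hZ)).aemeasurable)
  filter_upwards [(lintegral_eq_zero_iff' h_meas).1 h_null, condExp_nonneg (m := m) hf_nonneg]
    with x hx hgx hfx
  refine hgx.lt_of_ne' fun hxZ => ?_
  simp only [Pi.zero_apply, Set.indicator_of_mem (show x ∈ Z from hxZ), mul_one,
    ENNReal.ofReal_eq_zero] at hx
  linarith

theorem setLIntegral_inv_ofReal_condExp_indicator_le (hm : m ≤ m0) [IsFiniteMeasure μ]
    {A : Set X} (hA : MeasurableSet A) :
    ∫⁻ x in A, (ENNReal.ofReal (μ[A.indicator (fun _ => (1 : ℝ)) | m] x))⁻¹ ∂μ ≤ μ Set.univ := by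
  set g := μ[A.indicator (fun _ => (1 : ℝ)) | m]
  have hg : Measurable[m] fun x => (ENNReal.ofReal (g x))⁻¹ :=
    (ENNReal.measurable_ofReal.comp stronglyMeasurable_condExp.measurable).inv
  calc ∫⁻ x in A, (ENNReal.ofReal (g x))⁻¹ ∂μ
      = ∫⁻ x, ENNReal.ofReal (A.indicator (fun _ => (1 : ℝ)) x) *
          (ENNReal.ofReal (g x))⁻¹ ∂μ := by
        rw [← lintegral_indicator hA]
        refine lintegral_congr fun x => ?_
        by_cases hx : x ∈ A <;> simp [hx]
    _ = ∫⁻ x, ENNReal.ofReal (g x) * (ENNReal.ofReal (g x))⁻¹ ∂μ :=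
        (lintegral_ofReal_condExp_mul hm ((integrable_const 1).indicator hA)
          (ae_of_all _ (Set.indicator_nonneg fun _ _ => zero_le_one)) hg).symm
    _ ≤ ∫⁻ _, 1 ∂μ := lintegral_mono fun x => ENNReal.mul_inv_le_one _ -- `0 * ∞ = 0` in `ℝ≥0∞`
    _ = μ Set.univ := lintegral_one

theorem measure_univ_pow_le_lintegral_prod_mul_prod_lintegral_inv {ι : Type*} [Fintype ι]
    {G : ι → X → ℝ≥0∞} (hG : ∀ i, AEMeasurable (G i) μ) (hG_ne_zero : ∀ i, ∀ᵐ x ∂μ, G i x ≠ 0)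
    (hG_ne_top : ∀ i, ∀ᵐ x ∂μ, G i x ≠ ∞) :
    μ Set.univ ^ (Fintype.card ι + 1) ≤
      (∫⁻ x, ∏ i, G i x ∂μ) * ∏ i, ∫⁻ x, (G i x)⁻¹ ∂μ := by
  set p : ℝ := ((Fintype.card ι + 1 : ℕ) : ℝ)⁻¹
  have hp : 0 < p := by positivity
  set F : Option ι → X → ℝ≥0∞ := fun j x => j.elim (∏ i, G i x) fun i => (G i x)⁻¹
  have hF : ∀ j, AEMeasurable (F j) μ
    | none => Finset.aemeasurable_fun_prod _ fun i _ => hG i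
    | some i => (hG i).inv
  have h_sum : ∑ _j : Option ι, p = 1 := by
    simp only [Finset.sum_const, Finset.card_univ, Fintype.card_option, nsmul_eq_mul, p]
    exact mul_inv_cancel₀ (by positivity)
  have h_one : ∀ᵐ x ∂μ, ∏ j, F j x ^ p = 1 := by
    filter_upwards [ae_all_iff.2 hG_ne_zero, ae_all_iff.2 hG_ne_top] with x h0 htop
    simp only [Fintype.prod_option, F, Option.elim_none, Option.elim_some,
      ENNReal.prod_rpow_of_nonneg hp.le, ← Finset.prod_mul_distrib,
      ENNReal.mul_inv_cancel (h0 _) (htop _), Finset.prod_const_one, ENNReal.one_rpow]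
  have h_holder : μ Set.univ ≤ ((∫⁻ x, ∏ i, G i x ∂μ) * ∏ i, ∫⁻ x, (G i x)⁻¹ ∂μ) ^ p := by
    calc μ Set.univ = ∫⁻ x, ∏ j, F j x ^ p ∂μ := by rw [lintegral_congr_ae h_one, lintegral_one]
      _ ≤ ∏ j, (∫⁻ x, F j x ∂μ) ^ p :=
        ENNReal.lintegral_prod_norm_pow_le _ (fun j _ => hF j) h_sum fun _ _ => hp.le
      _ = _ := by rw [ENNReal.prod_rpow_of_nonneg hp.le, Fintype.prod_option]; rfl
  rw [ENNReal.le_rpow_inv_iff (by positivity), ENNReal.rpow_natCast] at h_holder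
  exact h_holder

theorem integral_indicator_one_mul_eq_toReal_setLIntegral {A : Set X} (hA : MeasurableSet A)
    {φ : X → ℝ} (hφ : AEStronglyMeasurable φ μ) (hφ_nonneg : 0 ≤ᵐ[μ] φ) :
    ∫ x, A.indicator (fun _ => (1 : ℝ)) x * φ x ∂μ =
      (∫⁻ x in A, ENNReal.ofReal (φ x) ∂μ).toReal := by
  have h_mul : (fun x => A.indicator (fun _ => (1 : ℝ)) x * φ x) = A.indicator φ := by
    ext x
    by_cases hx : x ∈ A <;> simp [hx]
  rw [h_mul, integral_indicator hA,
    integral_eq_lintegral_of_nonneg_ae (ae_restrict_of_ae hφ_nonneg) hφ.restrict]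

theorem measure_pow_le_setLIntegral_prod_ofReal_condExp_indicator {ι : Type*} [Fintype ι]
    [IsFiniteMeasure μ] {m : ι → MeasurableSpace X} (hm : ∀ i, m i ≤ m0) {A : Set X}
    (hA : MeasurableSet A) :
    μ A ^ (Fintype.card ι + 1) ≤
      (∫⁻ x in A, ∏ i, ENNReal.ofReal (μ[A.indicator (fun _ => (1 : ℝ)) | m i] x) ∂μ) *
        μ Set.univ ^ Fintype.card ι := by
  set g := fun i => μ[A.indicator (fun _ => (1 : ℝ)) | m i]
  have h_pos : ∀ i, ∀ᵐ x ∂μ.restrict A, ENNReal.ofReal (g i x) ≠ 0 := fun i => by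
    refine (ae_restrict_iff' hA).2 ?_
    filter_upwards [ae_pos_condExp_of_pos (hm i) ((integrable_const (1 : ℝ)).indicator hA)
      (ae_of_all _ (Set.indicator_nonneg fun _ _ => zero_le_one))] with x hx hxA
    exact (ENNReal.ofReal_pos.2 (hx (by simp [hxA]))).ne'
  calc μ A ^ (Fintype.card ι + 1) = μ.restrict A Set.univ ^ (Fintype.card ι + 1) := by
        rw [Measure.restrict_apply_univ]
    _ ≤ (∫⁻ x in A, ∏ i, ENNReal.ofReal (g i x) ∂μ) *
          ∏ i, ∫⁻ x in A, (ENNReal.ofReal (g i x))⁻¹ ∂μ :=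
        measure_univ_pow_le_lintegral_prod_mul_prod_lintegral_inv
          (fun i =>
            (stronglyMeasurable_condExp.mono (hm i)).measurable.ennreal_ofReal.aemeasurable)
          h_pos fun i => ae_of_all _ fun _ => ENNReal.ofReal_ne_top
    _ ≤ (∫⁻ x in A, ∏ i, ENNReal.ofReal (g i x) ∂μ) * ∏ _i : ι, μ Set.univ := by
        gcongr with i
        exact setLIntegral_inv_ofReal_condExp_indicator_le (hm i) hA
    _ = _ := by rw [Finset.prod_const, Finset.card_univ]

theorem setLIntegral_prod_ofReal_condExp_indicator_le_measure {ι : Type*} [Fintype ι]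
    (m : ι → MeasurableSpace X) (A : Set X) :
    ∫⁻ x in A, ∏ i, ENNReal.ofReal (μ[A.indicator (fun _ => (1 : ℝ)) | m i] x) ∂μ ≤ μ A := by
  have h_le_one : ∀ i, ∀ᵐ x ∂μ, ENNReal.ofReal (μ[A.indicator (fun _ => (1 : ℝ)) | m i] x) ≤ 1 :=
    fun i => by
      filter_upwards [ae_bdd_abs_condExp_of_ae_bdd_abs (m := m i) (R := (1 : ℝ))
        (f := A.indicator fun _ => (1 : ℝ)) (ae_of_all μ fun x => by
          by_cases hx : x ∈ A <;> simp [hx])] with x hx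
      exact ENNReal.ofReal_le_one.2 (le_of_abs_le hx)
  calc ∫⁻ x in A, ∏ i, ENNReal.ofReal (μ[A.indicator (fun _ => (1 : ℝ)) | m i] x) ∂μ
      ≤ ∫⁻ _ in A, 1 ∂μ := lintegral_mono_ae <| ae_restrict_of_ae <| by
        filter_upwards [ae_all_iff.2 h_le_one] with x hx
          using Finset.prod_le_one' fun i _ => hx i
    _ = μ A := setLIntegral_one A

end MeasureTheory

open MeasureTheory

theorem integral_indicator_mul_prod_condexp_ge
    {X : Type*} {m0 : MeasurableSpace X} (μ : Measure X) [IsProbabilityMeasure μ]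
    (l : ℕ) (𝓧 : Fin l → MeasurableSpace X) (h𝓧 : ∀ i, 𝓧 i ≤ m0)
    (A : Set X) (hA : MeasurableSet A) :
    (μ A).toReal ^ (l + 1) ≤
      ∫ x, A.indicator (fun _ => (1 : ℝ)) x *
        ∏ i, (μ[A.indicator (fun _ => (1 : ℝ)) | 𝓧 i]) x ∂μ := by
  set g := fun i => μ[A.indicator (fun _ => (1 : ℝ)) | 𝓧 i]
  have hg_nonneg : ∀ i, 0 ≤ᵐ[μ] g i := fun i =>
    condExp_nonneg (ae_of_all _ (Set.indicator_nonneg fun _ _ => zero_le_one))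
  have h_key := measure_pow_le_setLIntegral_prod_ofReal_condExp_indicator (μ := μ) h𝓧 hA
  rw [measure_univ, one_pow, mul_one, Fintype.card_fin] at h_key
  have h_integral : ∫ x, A.indicator (fun _ => (1 : ℝ)) x * ∏ i, g i x ∂μ =
      (∫⁻ x in A, ∏ i, ENNReal.ofReal (g i x) ∂μ).toReal := by
    rw [integral_indicator_one_mul_eq_toReal_setLIntegral hA
      (Finset.aestronglyMeasurable_fun_prod _ fun i _ =>
        (stronglyMeasurable_condExp.mono (h𝓧 i)).aestronglyMeasurable)
      (by filter_upwards [ae_all_iff.2 hg_nonneg] with x hx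
            using Finset.prod_nonneg fun i _ => hx i)]
    refine congrArg ENNReal.toReal (setLIntegral_congr_fun_ae hA ?_)
    filter_upwards [ae_all_iff.2 hg_nonneg] with x hx _
    exact ENNReal.ofReal_prod_of_nonneg fun i _ => hx i
  rw [h_integral, ← ENNReal.toReal_pow]
  exact ENNReal.toReal_mono (ne_top_of_le_ne_top (measure_ne_top μ A)
    (setLIntegral_prod_ofReal_condExp_indicator_le_measure 𝓧 A)) h_key
end

section
/- Let (X, 𝓑, μ, T) be a measure-preserving system on a probability space, let A ∈ 𝓑 with μ(A) > 0, and let ε > 0. Then the set {n ∈ ℕ : μ(A ∩ T^{-n}A) ≥ μ(A)² − ε} is syndetic (has bounded gaps). -/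
open MeasureTheory

/-- A set of naturals is syndetic if it has bounded gaps. -/
def Syndetic (S : Set ℕ) : Prop :=
  ∃ C : ℕ, ∀ᶠ x : ℕ in Filter.atTop, ∃ n ∈ S, x ≤ n ∧ n ≤ x + C

/-!
The Koopman operator `U f = f ∘ T` is a contraction of `L²(μ)`, so by von Neumann's mean ergodic
theorem the averages `N⁻¹ ∑_{n<N} Uⁿ 1_A` converge to the projection `P 1_A` onto the
`U`-invariant functions. Since `U` is a contraction fixing `P 1_A`, the shifted averages
`N⁻¹ ∑_{n<N} U^{m+n} 1_A` converge uniformly in `m`, so for one `N` every window `[m, m + N)`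
contains an `n` with `μ(A ∩ T⁻ⁿA) = ⟪1_A, Uⁿ 1_A⟫ ≥ ⟪1_A, P 1_A⟫ - ε`. Finally
`⟪1_A, P 1_A⟫ = ‖P 1_A‖² ≥ ⟪1_A, 1⟫² = μ(A)²`, as the constants are invariant.
-/

open Filter Finset
open scoped InnerProductSpace

theorem syndetic_setOf_le_of_forall_le_average {a : ℕ → ℝ} {c : ℝ} {N : ℕ} (hN : 0 < N)
    (h : ∀ m, c ≤ (N : ℝ)⁻¹ * ∑ n ∈ range N, a (m + n)) : Syndetic {n | c ≤ a n} := by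
  refine ⟨N, .of_forall fun m ↦ ?_⟩
  have hsum : ∑ _n ∈ range N, c ≤ ∑ n ∈ range N, a (m + n) := by
    rw [sum_const, card_range, nsmul_eq_mul, ← le_inv_mul_iff₀ (by positivity)]
    exact h m
  obtain ⟨n, hn, hcn⟩ := exists_le_of_sum_le (nonempty_range_iff.mpr hN.ne') hsum
  exact ⟨m + n, hcn, m.le_add_right n, by simp at hn; omega⟩

section Hilbert

variable {E : Type*} [NormedAddCommGroup E] [InnerProductSpace ℝ E]

theorem Submodule.sq_inner_le_inner_starProjection_mul (K : Submodule ℝ E)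
    [K.HasOrthogonalProjection] (f : E) {v : E} (hv : v ∈ K) :
    ⟪f, v⟫_ℝ ^ 2 ≤ ⟪f, K.starProjection f⟫_ℝ * ‖v‖ ^ 2 := by
  have inner_eq : ∀ w ∈ K, ⟪f, w⟫_ℝ = ⟪K.starProjection f, w⟫_ℝ := fun w hw ↦
    sub_eq_zero.mp <| by rw [← inner_sub_left, K.starProjection_inner_eq_zero f w hw]
  rw [inner_eq v hv, inner_eq _ (K.starProjection_apply_mem f), real_inner_self_eq_norm_sq,
    ← mul_pow]
  exact sq_le_sq' (neg_le_of_abs_le (abs_real_inner_le_norm _ _)) (real_inner_le_norm _ _)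

theorem ContinuousLinearMap.inner_iterate_birkhoffAverage (U : E →L[ℝ] E) (f g : E) (N m : ℕ) :
    ⟪g, U^[m] (birkhoffAverage ℝ U id N f)⟫_ℝ =
      (N : ℝ)⁻¹ * ∑ n ∈ range N, ⟪g, U^[m + n] f⟫_ℝ := by
  simp only [birkhoffAverage, birkhoffSum, id, Function.iterate_add_apply,
    ← FunLike.coe_pow_eq_iterate, map_smul, map_sum, inner_smul_right, inner_sum]

variable [CompleteSpace E]

theorem ContinuousLinearMap.tendstoUniformly_iterate_birkhoffAverage (U : E →L[ℝ] E)
    (hU : ‖U‖ ≤ 1) (f : E) :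
    TendstoUniformly (fun N m ↦ U^[m] (birkhoffAverage ℝ U id N f))
      (fun _ ↦ (U.eqLocus (1 : E →L[ℝ] E)).starProjection f) atTop := by
  set P := (U.eqLocus (1 : E →L[ℝ] E)).starProjection
  have hfix : Function.IsFixedPt U (P f) :=
    (U.eqLocus (1 : E →L[ℝ] E)).starProjection_apply_mem f
  have hlip : LipschitzWith 1 U := U.lipschitz.weaken hU
  rw [Metric.tendstoUniformly_iff]
  intro δ hδ
  filter_upwards [Metric.tendsto_nhds.mp
    (U.tendsto_birkhoffAverage_orthogonalProjection hU f) δ hδ] with N hN m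
  calc dist (P f) (U^[m] (birkhoffAverage ℝ U id N f))
      = dist (U^[m] (P f)) (U^[m] (birkhoffAverage ℝ U id N f)) := by rw [(hfix.iterate m).eq]
    _ ≤ dist (P f) (birkhoffAverage ℝ U id N f) := by
        simpa using (hlip.iterate m).dist_le_mul (P f) (birkhoffAverage ℝ U id N f)
    _ < δ := by rw [dist_comm]; exact hN

theorem ContinuousLinearMap.eventually_forall_le_average_inner_iterate (U : E →L[ℝ] E)
    (hU : ‖U‖ ≤ 1) (f : E) {δ : ℝ} (hδ : 0 < δ) :
    ∀ᶠ N : ℕ in atTop, ∀ m, ⟪f, (U.eqLocus (1 : E →L[ℝ] E)).starProjection f⟫_ℝ - δ ≤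
      (N : ℝ)⁻¹ * ∑ n ∈ range N, ⟪f, U^[m + n] f⟫_ℝ := by
  have h := (innerSL ℝ f).uniformContinuous.comp_tendstoUniformly
    (U.tendstoUniformly_iterate_birkhoffAverage hU f)
  filter_upwards [Metric.tendstoUniformly_iff.mp h δ hδ] with N hN m
  rw [← U.inner_iterate_birkhoffAverage]
  exact sub_le_comm.mp (le_of_abs_le (hN m).le)

end Hilbert

namespace MeasureTheory.MeasurePreserving

variable {X : Type*} [MeasurableSpace X] {μ : Measure X} {T : X → X}

noncomputable def koopman (hT : MeasurePreserving T μ μ) : Lp ℝ 2 μ →L[ℝ] Lp ℝ 2 μ :=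
  (Lp.compMeasurePreservingₗᵢ ℝ T hT).toContinuousLinearMap

theorem norm_koopman_le (hT : MeasurePreserving T μ μ) : ‖hT.koopman‖ ≤ 1 :=
  LinearIsometry.norm_toContinuousLinearMap_le _

theorem inner_indicator_koopman_iterate [IsFiniteMeasure μ] (hT : MeasurePreserving T μ μ)
    {A : Set X} (hA : MeasurableSet A) (n : ℕ) :
    ⟪indicatorConstLp 2 hA (measure_ne_top μ A) (1 : ℝ),
      hT.koopman^[n] (indicatorConstLp 2 hA (measure_ne_top μ A) (1 : ℝ))⟫_ℝ =
      μ.real (A ∩ T^[n] ⁻¹' A) := by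
  change ⟪_, (Lp.compMeasurePreserving T hT)^[n] _⟫_ℝ = _
  rw [Lp.compMeasurePreserving_iterate]
  exact L2.real_inner_indicatorConstLp_one_indicatorConstLp_one hA
    (hA.preimage (hT.iterate n).measurable)

theorem sq_measureReal_le_inner_starProjection [IsProbabilityMeasure μ]
    (hT : MeasurePreserving T μ μ) {A : Set X} (hA : MeasurableSet A) :
    μ.real A ^ 2 ≤ ⟪indicatorConstLp 2 hA (measure_ne_top μ A) (1 : ℝ),
      (hT.koopman.eqLocus (1 : Lp ℝ 2 μ →L[ℝ] Lp ℝ 2 μ)).starProjection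
        (indicatorConstLp 2 hA (measure_ne_top μ A) (1 : ℝ))⟫_ℝ := by
  set K := hT.koopman.eqLocus (1 : Lp ℝ 2 μ →L[ℝ] Lp ℝ 2 μ)
  -- `T ⁻¹' univ` is `univ` on the nose, so `U 1 = 1` holds by `rfl`
  have hone : indicatorConstLp 2 .univ (measure_ne_top μ _) (1 : ℝ) ∈ K := rfl
  have h := K.sq_inner_le_inner_starProjection_mul
    (indicatorConstLp 2 hA (measure_ne_top μ A) (1 : ℝ)) hone
  rwa [L2.real_inner_indicatorConstLp_one_indicatorConstLp_one, Set.inter_univ,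
    norm_indicatorConstLp two_ne_zero ENNReal.ofNat_ne_top, probReal_univ, norm_one,
    Real.one_rpow, one_mul, one_pow, mul_one] at h

end MeasureTheory.MeasurePreserving

theorem khintchine_recurrence_general
    {X : Type*} [MeasurableSpace X] (μ : Measure X) [IsProbabilityMeasure μ]
    (T : X → X) (hT : MeasurePreserving T μ μ)
    (A : Set X) (hA : MeasurableSet A) (ε : ℝ) (hε : 0 < ε) :
    Syndetic {n : ℕ | (μ A).toReal ^ 2 - ε ≤ (μ (A ∩ T^[n] ⁻¹' A)).toReal} := by
  set f := indicatorConstLp 2 hA (measure_ne_top μ A) (1 : ℝ)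
  set K := hT.koopman.eqLocus (1 : Lp ℝ 2 μ →L[ℝ] Lp ℝ 2 μ)
  obtain ⟨N, havg, hN⟩ := ((hT.koopman.eventually_forall_le_average_inner_iterate
    hT.norm_koopman_le f hε).and (eventually_gt_atTop 0)).exists
  refine syndetic_setOf_le_of_forall_le_average hN fun m ↦ ?_
  calc (μ A).toReal ^ 2 - ε ≤ ⟪f, K.starProjection f⟫_ℝ - ε := by
        gcongr; exact hT.sq_measureReal_le_inner_starProjection hA
    _ ≤ _ := havg m
    _ = _ := by simp only [f, hT.inner_indicator_koopman_iterate]; rfl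

theorem khintchine_recurrence
    {X : Type*} [MeasurableSpace X] (μ : Measure X) [IsProbabilityMeasure μ]
    (T : X → X) (hT : MeasurePreserving T μ μ)
    (A : Set X) (hA : MeasurableSet A) (hApos : 0 < μ A) (ε : ℝ) (hε : 0 < ε) :
    Syndetic {n : ℕ | (μ A).toReal ^ 2 - ε ≤ (μ (A ∩ T^[n] ⁻¹' A)).toReal} :=
  khintchine_recurrence_general μ T hT A hA ε hε
end

section
/- Let p(t) ∈ ℝ[t] be a polynomial with at least one irrational coefficient in a degree ≥ 1 term. Then the sequence (p(n) mod 1)_{n∈ℕ} is equidistributed in the torus 𝕋 = ℝ/ℤ; equivalently, for every nonzero integer h, (1/N) Σ_{n=1}^{N} e(h·p(n)) → 0 as N → ∞, where e(x) = exp(2πix). -/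
/-!
If the leading coefficient `a` of `q`, of degree `d ≥ 1`, is irrational, then the correlations
`e(q(n + h)) * conj (e(q(n))) = e(q(n + h) - q(n))` are exponentials of a polynomial of
degree `d - 1` with irrational leading coefficient `d * h * a`. Van der Corput's inequality
`‖(1/N) ∑_{n<N} u n‖ ≤ √(1/H + ∑_{0<h<H} ‖(1/N) ∑_{n<N} u (n + h) * conj (u n)‖ + 2H/N) + 2H/N`
then lowers the degree, down to degree 1, where the sum is geometric.
A general `p` with an irrational coefficient in positive degree splits as `Z / L + q` with
`Z ∈ ℤ[X]` and `q` of irrational leading coefficient (peel off the rational top coefficients).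
On each residue class `n = L * m + r`, `e(Z(n) / L)` is constant and `q(L * m + r)` still has an
irrational leading coefficient.
-/

open Polynomial Filter Finset Topology

namespace Weyl

noncomputable def e (x : ℝ) : ℂ := Complex.exp (2 * Real.pi * Complex.I * x)

lemma e_add (x y : ℝ) : e (x + y) = e x * e y := by
  simp only [e, Complex.ofReal_add, mul_add, Complex.exp_add]

lemma norm_e (x : ℝ) : ‖e x‖ = 1 := by
  simp [e, Complex.norm_exp, Complex.mul_re]

lemma conj_e (x : ℝ) : starRingEnd ℂ (e x) = e (-x) := by
  simp [e, ← Complex.exp_conj, map_ofNat]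

lemma e_natCast_mul (n : ℕ) (x : ℝ) : e (n * x) = e x ^ n := by
  simp only [e, ← Complex.exp_nat_mul]
  push_cast
  ring_nf

lemma e_add_intCast (x : ℝ) (z : ℤ) : e (x + z) = e x := by
  have hz : e z = 1 := by
    rw [e, ← Complex.exp_int_mul_two_pi_mul_I z]
    push_cast
    ring_nf
  rw [e_add, hz, mul_one]

lemma e_ne_one {x : ℝ} (hx : Irrational x) : e x ≠ 1 := by
  rw [e, Ne, Complex.exp_eq_one_iff]
  rintro ⟨n, hn⟩
  refine hx.ne_int n (Complex.ofReal_injective ?_)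
  have h2πI : 2 * Real.pi * Complex.I ≠ 0 := by simp [Real.pi_ne_zero]
  push_cast
  exact mul_left_cancel₀ h2πI (hn.trans (mul_comm _ _))

noncomputable def cesaroMean (u : ℕ → ℂ) (N : ℕ) : ℂ := (N : ℂ)⁻¹ * ∑ n ∈ range N, u n

def HasZeroMean (u : ℕ → ℂ) : Prop := Tendsto (cesaroMean u) atTop (𝓝 0)

lemma norm_cesaroMean (u : ℕ → ℂ) (N : ℕ) : ‖cesaroMean u N‖ = ‖∑ n ∈ range N, u n‖ / N := by
  rw [cesaroMean, norm_mul, norm_inv, Complex.norm_natCast, inv_mul_eq_div]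

lemma norm_sum_range_eq_mul_norm_cesaroMean (u : ℕ → ℂ) (N : ℕ) :
    ‖∑ n ∈ range N, u n‖ = N * ‖cesaroMean u N‖ := by
  rcases N.eq_zero_or_pos with rfl | hN
  · simp
  · rw [norm_cesaroMean]; field_simp

lemma norm_sum_le_card {ι : Type*} (s : Finset ι) {f : ι → ℂ} (hf : ∀ i, ‖f i‖ ≤ 1) :
    ‖∑ i ∈ s, f i‖ ≤ #s := by
  simpa using norm_sum_le_of_le s fun i _ => hf i

lemma norm_sum_range_add_sub_le {u : ℕ → ℂ} (hu : ∀ n, ‖u n‖ ≤ 1) (N j : ℕ) :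
    ‖∑ n ∈ range N, u (n + j) - ∑ n ∈ range N, u n‖ ≤ 2 * j := by
  have hsplit : ∑ n ∈ range N, u (n + j) - ∑ n ∈ range N, u n
      = ∑ n ∈ range j, u (N + n) - ∑ n ∈ range j, u n := by
    have h := sum_range_add u j N
    rw [add_comm j N, sum_range_add] at h
    simp only [add_comm _ j]
    linear_combination -h
  calc _ = ‖∑ n ∈ range j, u (N + n) - ∑ n ∈ range j, u n‖ := by rw [hsplit]
    _ ≤ j + j := (norm_sub_le _ _).trans <| by
        gcongr <;> simpa using norm_sum_le_card (range j) fun n => hu _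
    _ = 2 * j := by ring

lemma hasZeroMean_of_norm_le {u : ℕ → ℂ} {b : ℕ → ℝ} (hb : Tendsto b atTop (𝓝 0))
    (hu : ∀ᶠ N in atTop, ‖∑ n ∈ range N, u n‖ / N ≤ b N) : HasZeroMean u := by
  rw [HasZeroMean, tendsto_zero_iff_norm_tendsto_zero]
  refine squeeze_zero' (Eventually.of_forall fun N => norm_nonneg _) ?_ hb
  simpa only [norm_cesaroMean] using hu

lemma HasZeroMean.const_mul {u : ℕ → ℂ} (hu : HasZeroMean u) (c : ℂ) :
    HasZeroMean (fun n => c * u n) := by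
  have h : cesaroMean (fun n => c * u n) = fun N => c * cesaroMean u N := by
    ext N; simp only [cesaroMean, ← mul_sum]; ring
  simpa [HasZeroMean, h] using Tendsto.const_mul c hu

lemma HasZeroMean.comp_add {u : ℕ → ℂ} (hu : ∀ n, ‖u n‖ ≤ 1) (h : HasZeroMean u) (j : ℕ) :
    HasZeroMean (fun n => u (n + j)) := by
  refine hasZeroMean_of_norm_le (b := fun N => ‖cesaroMean u N‖ + 2 * j / N) ?_ ?_
  · simpa using (tendsto_zero_iff_norm_tendsto_zero.1 h).add
      (tendsto_const_div_atTop_nhds_zero_nat (2 * j : ℝ))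
  · refine Eventually.of_forall fun N => ?_
    rw [norm_cesaroMean, ← add_div]
    gcongr
    calc _ ≤ ‖∑ n ∈ range N, u n‖ + ‖∑ n ∈ range N, u (n + j) - ∑ n ∈ range N, u n‖ :=
          norm_le_norm_add_norm_sub' _ _
      _ ≤ _ := by grw [norm_sum_range_add_sub_le hu]

lemma hasZeroMean_pow {z : ℂ} (hz : ‖z‖ = 1) (hz1 : z ≠ 1) : HasZeroMean (z ^ ·) := by
  refine hasZeroMean_of_norm_le (tendsto_const_div_atTop_nhds_zero_nat (2 / ‖z - 1‖))
    (Eventually.of_forall fun N => ?_)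
  gcongr
  rw [geom_sum_eq hz1, norm_div]
  gcongr
  calc ‖z ^ N - 1‖ ≤ ‖z ^ N‖ + ‖(1 : ℂ)‖ := norm_sub_le _ _
    _ = 2 := by rw [norm_pow, hz]; norm_num

section VanDerCorput

variable {u : ℕ → ℂ}

lemma norm_sum_shift_mul_conj_sub_le (hu : ∀ n, ‖u n‖ ≤ 1) (N : ℕ) {j j' : ℕ} (hj : j' ≤ j) :
    ‖∑ n ∈ range N, u (n + j) * starRingEnd ℂ (u (n + j'))
      - ∑ n ∈ range N, u (n + (j - j')) * starRingEnd ℂ (u n)‖ ≤ 2 * j' := by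
  have hw : ∀ n, ‖u (n + (j - j')) * starRingEnd ℂ (u n)‖ ≤ 1 := fun n => by
    simpa using mul_le_one₀ (hu _) (norm_nonneg _) (hu n)
  have hshift : ∀ n, n + j' + (j - j') = n + j := fun n => by omega
  simpa only [hshift] using norm_sum_range_add_sub_le hw N j'

lemma sum_norm_sq_sum_window_le (hu : ∀ n, ‖u n‖ ≤ 1) (N H : ℕ) :
    ∑ n ∈ range N, ‖∑ j ∈ range H, u (n + j)‖ ^ 2
      ≤ H * N + H ^ 2 * (∑ h ∈ Ico 1 H, ‖∑ n ∈ range N, u (n + h) * starRingEnd ℂ (u n)‖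
        + 2 * H) := by
  set C : ℕ → ℂ := fun h => ∑ n ∈ range N, u (n + h) * starRingEnd ℂ (u n)
  set S := ∑ h ∈ Ico 1 H, ‖C h‖
  set T : ℕ → ℕ → ℂ := fun j j' => ∑ n ∈ range N, u (n + j) * starRingEnd ℂ (u (n + j'))
  have hT_offdiag : ∀ j j', j' < j → j < H → ‖T j j'‖ ≤ S + 2 * H := by
    intro j j' hlt hjH
    have hS : ‖C (j - j')‖ ≤ S :=
      single_le_sum (f := fun h => ‖C h‖) (fun _ _ => norm_nonneg _)
        (mem_Ico.2 ⟨by omega, by omega⟩)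
    have hj' : (j' : ℝ) ≤ H := by exact_mod_cast (hlt.trans hjH).le
    calc ‖T j j'‖ ≤ ‖C (j - j')‖ + ‖T j j' - C (j - j')‖ := norm_le_norm_add_norm_sub' _ _
      _ ≤ S + 2 * H := by grw [hS, norm_sum_shift_mul_conj_sub_le hu N hlt.le, hj']
  have hT : ∀ j ∈ range H, ∀ j' ∈ range H,
      ‖T j j'‖ ≤ (if j = j' then (N : ℝ) else 0) + (S + 2 * H) := by
    intro j hj j' hj'
    rw [mem_range] at hj hj'
    rcases lt_trichotomy j j' with hlt | rfl | hgt
    · have hsymm : T j j' = starRingEnd ℂ (T j' j) := by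
        simp only [T, map_sum, map_mul, Complex.conj_conj, mul_comm]
      rw [hsymm, Complex.norm_conj, if_neg hlt.ne, zero_add]
      exact hT_offdiag j' j hlt hj'
    · have hdiag : ‖T j j‖ ≤ N := by
        simpa using norm_sum_le_card (range N) fun n => by
          simpa using mul_le_one₀ (hu (n + j)) (norm_nonneg _) (hu (n + j))
      rw [if_pos rfl]
      have : 0 ≤ S := sum_nonneg fun _ _ => norm_nonneg _
      linarith
    · rw [if_neg hgt.ne']
      linarith [hT_offdiag j j' hgt hj]
  have hexpand : ((∑ n ∈ range N, ‖∑ j ∈ range H, u (n + j)‖ ^ 2 : ℝ) : ℂ)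
      = ∑ j ∈ range H, ∑ j' ∈ range H, T j j' := by
    push_cast
    simp only [← Complex.mul_conj', map_sum, sum_mul_sum, T]
    rw [sum_comm]
    exact sum_congr rfl fun _ _ => sum_comm
  calc ∑ n ∈ range N, ‖∑ j ∈ range H, u (n + j)‖ ^ 2
      ≤ ‖((∑ n ∈ range N, ‖∑ j ∈ range H, u (n + j)‖ ^ 2 : ℝ) : ℂ)‖ := by
        rw [Complex.norm_real]; exact le_abs_self _
    _ ≤ ∑ j ∈ range H, ∑ j' ∈ range H, ‖T j j'‖ := by
        rw [hexpand]
        exact (norm_sum_le _ _).trans (sum_le_sum fun _ _ => norm_sum_le _ _)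
    _ ≤ ∑ j ∈ range H, ∑ j' ∈ range H,
          ((if j = j' then (N : ℝ) else 0) + (S + 2 * H)) :=
        sum_le_sum fun j hj => sum_le_sum fun j' hj' => hT j hj j' hj'
    _ = H * N + H ^ 2 * (S + 2 * H) := by
        simp only [sum_add_distrib, sum_ite_eq]
        rw [sum_ite_of_true fun j hj => hj]
        simp only [sum_const, card_range, nsmul_eq_mul]
        ring

lemma norm_mul_sum_sub_sum_sum_window_le (hu : ∀ n, ‖u n‖ ≤ 1) (N H : ℕ) :
    ‖(H : ℂ) * ∑ n ∈ range N, u n - ∑ n ∈ range N, ∑ j ∈ range H, u (n + j)‖ ≤ 2 * H ^ 2 := by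
  have hconst : (H : ℂ) * ∑ n ∈ range N, u n = ∑ _j ∈ range H, ∑ n ∈ range N, u n := by simp
  rw [sum_comm, hconst, ← sum_sub_distrib]
  calc _ ≤ ∑ j ∈ range H, (2 * H : ℝ) := norm_sum_le_of_le _ fun j hj => by
        rw [norm_sub_rev]
        refine (norm_sum_range_add_sub_le hu N j).trans ?_
        gcongr
        exact (mem_range.1 hj).le
    _ = 2 * H ^ 2 := by simp; ring

lemma norm_cesaroMean_le_van_der_corput (hu : ∀ n, ‖u n‖ ≤ 1) {N H : ℕ} (hN : 0 < N)
    (hH : 0 < H) :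
    ‖cesaroMean u N‖ ≤ √(1 / H + ∑ h ∈ Ico 1 H,
        ‖cesaroMean (fun n => u (n + h) * starRingEnd ℂ (u n)) N‖ + 2 * H / N) + 2 * H / N := by
  set A := ∑ n ∈ range N, u n
  -- `V` sums `u` over windows of length `H`; Cauchy–Schwarz on `V` brings in the correlations.
  set V := ∑ n ∈ range N, ∑ j ∈ range H, u (n + j)
  set S := ∑ h ∈ Ico 1 H, ‖∑ n ∈ range N, u (n + h) * starRingEnd ℂ (u n)‖
  have hN' : (0 : ℝ) < N := by exact_mod_cast hN
  have hH' : (0 : ℝ) < H := by exact_mod_cast hH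
  have hS : ∑ h ∈ Ico 1 H, ‖cesaroMean (fun n => u (n + h) * starRingEnd ℂ (u n)) N‖
      = S / N := by
    simp only [norm_cesaroMean, S, sum_div]
  have hV_sq : ‖V‖ ^ 2 ≤ N * (H * N + H ^ 2 * (S + 2 * H)) := by
    calc ‖V‖ ^ 2 ≤ (∑ n ∈ range N, ‖∑ j ∈ range H, u (n + j)‖) ^ 2 := by
          gcongr; exact norm_sum_le _ _
      _ ≤ N * ∑ n ∈ range N, ‖∑ j ∈ range H, u (n + j)‖ ^ 2 := by
          simpa using sq_sum_le_card_mul_sum_sq (s := range N)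
            (f := fun n => ‖∑ j ∈ range H, u (n + j)‖)
      _ ≤ N * (H * N + H ^ 2 * (S + 2 * H)) := by
          gcongr; exact sum_norm_sq_sum_window_le hu N H
  have hV : ‖V‖ / (H * N) ≤ √(1 / H + S / N + 2 * H / N) := by
    refine (Real.le_sqrt (by positivity) (by positivity)).2 ?_
    rw [div_pow, div_le_iff₀ (by positivity)]
    calc ‖V‖ ^ 2 ≤ N * (H * N + H ^ 2 * (S + 2 * H)) := hV_sq
      _ = (1 / H + S / N + 2 * H / N) * (H * N) ^ 2 := by field_simp; ring
  have hA : H * ‖A‖ ≤ ‖V‖ + 2 * H ^ 2 := by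
    calc H * ‖A‖ = ‖(H : ℂ) * A‖ := by simp
      _ ≤ ‖V‖ + ‖(H : ℂ) * A - V‖ := norm_le_norm_add_norm_sub' _ _
      _ ≤ ‖V‖ + 2 * H ^ 2 := by grw [norm_mul_sum_sub_sum_sum_window_le hu N H]
  rw [hS, norm_cesaroMean]
  calc ‖A‖ / N = H * ‖A‖ / (H * N) := by field_simp
    _ ≤ (‖V‖ + 2 * H ^ 2) / (H * N) := by gcongr
    _ = ‖V‖ / (H * N) + 2 * H / N := by field_simp
    _ ≤ _ := by grw [hV]

theorem HasZeroMean.of_hasZeroMean_correlations (hu : ∀ n, ‖u n‖ ≤ 1)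
    (hcorr : ∀ h, 0 < h → HasZeroMean (fun n => u (n + h) * starRingEnd ℂ (u n))) :
    HasZeroMean u := by
  rw [HasZeroMean, NormedAddGroup.tendsto_nhds_zero]
  intro ε hε
  obtain ⟨H₀, hH₀⟩ := exists_nat_one_div_lt (pow_pos hε 2)
  set H := H₀ + 1
  have hbound : Tendsto (fun N : ℕ => √(1 / H + ∑ h ∈ Ico 1 H,
      ‖cesaroMean (fun n => u (n + h) * starRingEnd ℂ (u n)) N‖ + 2 * H / N) + 2 * H / N)
      atTop (𝓝 (√(1 / H + 0 + 0) + 0)) := by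
    have hsum := tendsto_finsetSum (Ico 1 H) fun h hh =>
      (hcorr h (mem_Ico.1 hh).1).norm
    have hdecay := tendsto_const_div_atTop_nhds_zero_nat (2 * H : ℝ)
    simp only [norm_zero, sum_const_zero] at hsum
    exact ((tendsto_const_nhds.add hsum).add hdecay).sqrt.add hdecay
  have hlt : √(1 / H + 0 + 0) + 0 < ε := by
    rw [add_zero, add_zero, add_zero, Real.sqrt_lt' hε]
    exact_mod_cast hH₀
  filter_upwards [hbound.eventually (gt_mem_nhds hlt), eventually_gt_atTop 0] with N hN hN0
  exact (norm_cesaroMean_le_van_der_corput hu hN0 H₀.succ_pos).trans_lt hN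

end VanDerCorput

lemma sum_range_mul_eq_sum_progressions {M : Type*} [AddCommMonoid M] (f : ℕ → M) (s k : ℕ) :
    ∑ n ∈ range (s * k), f n = ∑ r ∈ range s, ∑ m ∈ range k, f (s * m + r) := by
  induction k with
  | zero => simp
  | succ k ih => simp only [mul_add_one, sum_range_add, ih, sum_range_succ, ← sum_add_distrib]

theorem HasZeroMean.of_progressions {f : ℕ → ℂ} (hf : ∀ n, ‖f n‖ ≤ 1) {s : ℕ} (hs : 0 < s)
    (hr : ∀ r < s, HasZeroMean (fun m => f (s * m + r))) : HasZeroMean f := by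
  set b : ℕ → ℝ := fun N => ∑ r ∈ range s, ‖cesaroMean (fun m => f (s * m + r)) (N / s)‖ + s / N
  have hb : Tendsto b atTop (𝓝 (∑ _r ∈ range s, ‖(0 : ℂ)‖ + 0)) :=
    (tendsto_finsetSum _ fun r hr' => ((hr r (mem_range.1 hr')).norm.comp
      (Nat.tendsto_div_const_atTop hs.ne'))).add (tendsto_const_div_atTop_nhds_zero_nat _)
  simp only [norm_zero, sum_const_zero, add_zero] at hb
  refine hasZeroMean_of_norm_le hb (eventually_gt_atTop 0 |>.mono fun N hN => ?_)
  have hN' : (0 : ℝ) < N := by exact_mod_cast hN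
  have hM : ((N / s : ℕ) : ℝ) ≤ N := by exact_mod_cast Nat.div_le_self N s
  have htail : ((N % s : ℕ) : ℝ) ≤ s := by exact_mod_cast (Nat.mod_lt N hs).le
  rw [← Nat.div_add_mod N s, sum_range_add, sum_range_mul_eq_sum_progressions, Nat.div_add_mod]
  rw [div_le_iff₀ hN']
  calc ‖∑ r ∈ range s, ∑ m ∈ range (N / s), f (s * m + r)
        + ∑ k ∈ range (N % s), f (s * (N / s) + k)‖
      ≤ ∑ r ∈ range s, ‖∑ m ∈ range (N / s), f (s * m + r)‖ + (N % s : ℕ) := by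
        refine (norm_add_le _ _).trans (add_le_add (norm_sum_le _ _) ?_)
        simpa using norm_sum_le_card (range (N % s)) fun k => hf (s * (N / s) + k)
    _ ≤ ∑ r ∈ range s, N * ‖cesaroMean (fun m => f (s * m + r)) (N / s)‖ + s := by
        simp only [norm_sum_range_eq_mul_norm_cesaroMean _ (N / s)]
        gcongr
    _ = b N * N := by simp only [b, ← mul_sum]; field_simp

section Taylor

variable {R : Type*} [CommRing R] {p : R[X]}

lemma coeff_taylor_of_natDegree_le {m : ℕ} (hm : p.natDegree ≤ m) (c : R) :
    (taylor c p).coeff m = p.coeff m := by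
  rw [taylor_coeff, eq_C_of_natDegree_le_zero ((natDegree_hasseDeriv_le p m).trans (by omega)),
    eval_C, hasseDeriv_coeff, zero_add, Nat.choose_self, Nat.cast_one, one_mul]

lemma coeff_taylor_of_natDegree_eq_succ {d : ℕ} (hd : p.natDegree = d + 1) (c : R) :
    (taylor c p).coeff d = p.coeff d + (d + 1) * p.coeff (d + 1) * c := by
  have hlin : (hasseDeriv d p).natDegree ≤ 1 := (natDegree_hasseDeriv_le p d).trans (by omega)
  rw [taylor_coeff, eq_X_add_C_of_natDegree_le_one hlin]
  simp only [eval_add, eval_mul, eval_C, eval_X, hasseDeriv_coeff, zero_add,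
    Nat.choose_self, add_comm 1 d, Nat.choose_succ_self_right]
  push_cast
  ring

lemma natDegree_taylor_sub_le {d : ℕ} (hd : p.natDegree = d + 1) (c : R) :
    (taylor c p - p).natDegree ≤ d := by
  rw [natDegree_le_iff_coeff_eq_zero]
  intro m hm
  rw [coeff_sub, coeff_taylor_of_natDegree_le (by rw [hd]; exact_mod_cast hm), sub_self]

lemma coeff_taylor_sub {d : ℕ} (hd : p.natDegree = d + 1) (c : R) :
    (taylor c p - p).coeff d = (d + 1) * p.leadingCoeff * c := by
  rw [coeff_sub, coeff_taylor_of_natDegree_eq_succ hd, leadingCoeff, hd, add_sub_cancel_left]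

end Taylor

theorem hasZeroMean_e_eval_of_irrational_leadingCoeff {q : ℝ[X]} (hdeg : 0 < q.natDegree)
    (hq : Irrational q.leadingCoeff) : HasZeroMean (fun n => e (q.eval (n : ℝ))) := by
  obtain ⟨d, hd⟩ := Nat.exists_eq_add_one.2 hdeg
  induction d generalizing q with
  | zero =>
    have heval : ∀ n : ℕ, q.eval (n : ℝ) = q.coeff 0 + n * q.leadingCoeff := fun n => by
      conv_lhs => rw [eq_X_add_C_of_natDegree_le_one hd.le]
      rw [leadingCoeff, hd, eval_add, eval_mul, eval_C, eval_C, eval_X]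
      ring
    simp only [heval, e_add, e_natCast_mul]
    exact (hasZeroMean_pow (norm_e _) (e_ne_one hq)).const_mul _
  | succ d ih =>
    refine HasZeroMean.of_hasZeroMean_correlations (fun n => (norm_e _).le) fun h hh => ?_
    set D := taylor (h : ℝ) q - q
    have hirr : Irrational (D.coeff (d + 1)) := by
      rw [coeff_taylor_sub hd]
      exact_mod_cast (hq.natCast_mul (d + 1).succ_ne_zero).mul_natCast hh.ne'
    have hD : D.natDegree = d + 1 :=
      natDegree_eq_of_le_of_coeff_ne_zero (natDegree_taylor_sub_le hd _) hirr.ne_zero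
    have hdiff : ∀ n : ℕ, e (q.eval ((n + h : ℕ) : ℝ)) * starRingEnd ℂ (e (q.eval (n : ℝ)))
        = e (D.eval (n : ℝ)) := fun n => by
      rw [conj_e, ← e_add, eval_sub, taylor_eval, Nat.cast_add, sub_eq_add_neg]
    simp only [hdiff]
    exact ih (hD ▸ d.succ_pos) (by rwa [leadingCoeff, hD]) hD

lemma exists_eq_intPoly_div_add_irrational_leadingCoeff (p : ℝ[X])
    (hp : ∃ k, 1 ≤ k ∧ Irrational (p.coeff k)) :
    ∃ (L : ℕ) (Z : ℤ[X]) (q : ℝ[X]), 0 < L ∧ 0 < q.natDegree ∧ Irrational q.leadingCoeff ∧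
      p = C (L : ℝ)⁻¹ * Z.map (Int.castRingHom ℝ) + q := by
  induction hn : p.natDegree using Nat.strong_induction_on generalizing p with
  | _ n ih =>
  obtain ⟨k, hk, hirr⟩ := hp
  have hk_le : k ≤ n := hn ▸ le_natDegree_of_ne_zero hirr.ne_zero
  by_cases hlc : Irrational p.leadingCoeff
  · exact ⟨1, 0, p, one_pos, by omega, hlc, by simp⟩
  obtain ⟨a, ha⟩ : p.leadingCoeff ∈ Set.range ((↑) : ℚ → ℝ) := not_not.1 hlc
  have hk_lt : k < n := lt_of_le_of_ne hk_le fun h => hlc (by rwa [leadingCoeff, hn, ← h])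
  obtain ⟨L, Z, q, hL, hq, hqlc, heq⟩ := ih _ ((eraseLead_natDegree_le p).trans_lt (by omega))
    p.eraseLead ⟨k, hk, by rwa [eraseLead_coeff_of_ne _ (hn ▸ hk_lt.ne)]⟩ rfl
  refine ⟨L * a.den, C (a.den : ℤ) * Z + C (L * a.num : ℤ) * X ^ n, q, by positivity, hq, hqlc, ?_⟩
  have hden : ((L : ℝ) * a.den)⁻¹ * a.den = (L : ℝ)⁻¹ := by field_simp
  have hnum : ((L : ℝ) * a.den)⁻¹ * (L * a.num) = a := by rw [Rat.cast_def]; field_simp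
  conv_lhs => rw [← p.eraseLead_add_C_mul_X_pow, heq, ← ha, hn]
  rw [Polynomial.map_add, Polynomial.map_mul, Polynomial.map_mul, Polynomial.map_pow, map_C, map_C,
    map_X, eq_intCast, eq_intCast, mul_add, ← mul_assoc, ← mul_assoc, ← C_mul, ← C_mul]
  push_cast
  rw [hden, hnum]
  ring

theorem hasZeroMean_e_eval_of_irrational_coeff {p : ℝ[X]}
    (hp : ∃ k, 1 ≤ k ∧ Irrational (p.coeff k)) : HasZeroMean (fun n => e (p.eval (n : ℝ))) := by
  obtain ⟨L, Z, q, hL, hqdeg, hqlc, rfl⟩ := exists_eq_intPoly_div_add_irrational_leadingCoeff p hp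
  refine HasZeroMean.of_progressions (fun n => (norm_e _).le) hL fun r _ => ?_
  set Q := q.comp (C (L : ℝ) * X + C (r : ℝ))
  have hL' : (L : ℝ) ≠ 0 := by positivity
  have hQdeg : Q.natDegree = q.natDegree := by rw [natDegree_comp, natDegree_linear hL', mul_one]
  have hQlc : Irrational Q.leadingCoeff := by
    rw [leadingCoeff_comp (by rw [natDegree_linear hL']; exact one_ne_zero),
      leadingCoeff_linear hL']
    exact_mod_cast hqlc.mul_natCast (pow_ne_zero _ hL.ne')
  have hperiodic : ∀ m : ℕ,
      e (eval ((L * m + r : ℕ) : ℝ) (C (L : ℝ)⁻¹ * Z.map (Int.castRingHom ℝ) + q))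
        = e (Z.eval (r : ℤ) / L) * e (Q.eval m) := fun m => by
    obtain ⟨t, ht⟩ : (L : ℤ) ∣ Z.eval ((L * m + r : ℕ) : ℤ) - Z.eval (r : ℤ) :=
      (dvd_mul_right _ (m : ℤ)).trans (by simpa using sub_dvd_eval_sub ((L * m + r : ℕ) : ℤ) r Z)
    have harg : eval ((L * m + r : ℕ) : ℝ) (C (L : ℝ)⁻¹ * Z.map (Int.castRingHom ℝ) + q)
        = (Z.eval (r : ℤ) / L + Q.eval (m : ℝ) : ℝ) + t := by
      rw [eval_add, eval_mul, eval_C, ← Int.cast_natCast (R := ℝ) (L * m + r), eval_intCast_map,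
        eq_intCast, Int.cast_id, eq_add_of_sub_eq' ht]
      simp only [Q, eval_comp, eval_add, eval_mul, eval_C, eval_X]
      push_cast
      field_simp
      ring
    rw [harg, e_add_intCast, e_add]
  simpa only [hperiodic] using
    (hasZeroMean_e_eval_of_irrational_leadingCoeff (hQdeg ▸ hqdeg) hQlc).const_mul _

end Weyl

open Weyl in
theorem weyl_equidistribution_exponential_sums
    (p : ℝ[X]) (hp : ∃ k, 1 ≤ k ∧ Irrational (p.coeff k)) :
    ∀ h : ℤ, h ≠ 0 →
      Tendsto (fun N : ℕ => (N : ℂ)⁻¹ *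
          ∑ n ∈ Finset.Icc 1 N,
            Complex.exp (2 * Real.pi * Complex.I * ((h : ℝ) * p.eval (n : ℝ) : ℝ)))
        atTop (nhds 0) := by
  intro h hh
  obtain ⟨k, hk, hirr⟩ := hp
  have hhp : ∃ k, 1 ≤ k ∧ Irrational ((C (h : ℝ) * p).coeff k) :=
    ⟨k, hk, by rw [coeff_C_mul]; exact hirr.intCast_mul hh⟩
  have hmean := (hasZeroMean_e_eval_of_irrational_coeff hhp).comp_add (fun n => (norm_e _).le) 1
  refine hmean.congr fun N => ?_
  rw [cesaroMean, range_eq_Ico, sum_Ico_add' (fun n : ℕ => e ((C (h : ℝ) * p).eval (n : ℝ))),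
    zero_add, Ico_add_one_right_eq_Icc]
  simp only [eval_mul, eval_C, e]
end

section
/- Let a(n) be a bounded sequence of nonnegative reals and c ∈ ℝ. Suppose that lim_{N−M→∞} (1/(N−M)) Σ_{n=M}^{N−1} a(n) ≥ c, in the sense that for every δ > 0 there is N₀ such that for all M < N with N − M ≥ N₀ the average over [M, N) is at least c − δ. Then for every ε > 0 the set {n ∈ ℕ : a(n) ≥ c − ε} is syndetic. -/
open Finset

lemma exists_mem_Ico_le_of_le_sum_div {K : Type*} [Field K] [LinearOrder K]
    [IsStrictOrderedRing K] {a : ℕ → K} {M N : ℕ} (hMN : M < N) {t : K}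
    (h : t ≤ (∑ n ∈ Ico M N, a n) / ((N : K) - M)) : ∃ n ∈ Ico M N, t ≤ a n :=
  exists_le_of_le_expect (nonempty_Ico.2 hMN) <| by
    rwa [expect_eq_sum_div_card, Nat.card_Ico, Nat.cast_sub hMN.le]

theorem syndetic_of_uniform_cesaro_lower_bound_general
    (a : ℕ → ℝ) (c : ℝ)
    (h : ∀ δ > (0 : ℝ), ∃ N₀ : ℕ, ∀ M N : ℕ, M < N → N₀ ≤ N - M →
      c - δ ≤ (∑ n ∈ Finset.Ico M N, a n) / ((N : ℝ) - M)) :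
    ∀ ε > (0 : ℝ), Syndetic {n : ℕ | c - ε ≤ a n} := by
  intro ε hε
  obtain ⟨N₀, hN₀⟩ := h ε hε
  refine ⟨N₀, Filter.Eventually.of_forall fun x => ?_⟩
  obtain ⟨n, hn, han⟩ := exists_mem_Ico_le_of_le_sum_div (by omega)
    (hN₀ x (x + N₀ + 1) (by omega) (by omega))
  rw [mem_Ico] at hn
  exact ⟨n, han, hn.1, by omega⟩

theorem syndetic_of_uniform_cesaro_lower_bound
    (a : ℕ → ℝ) (h0 : ∀ n, 0 ≤ a n) (B : ℝ) (hB : ∀ n, a n ≤ B) (c : ℝ)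
    (h : ∀ δ > (0 : ℝ), ∃ N₀ : ℕ, ∀ M N : ℕ, M < N → N₀ ≤ N - M →
      c - δ ≤ (∑ n ∈ Finset.Ico M N, a n) / ((N : ℝ) - M)) :
    ∀ ε > (0 : ℝ), Syndetic {n : ℕ | c - ε ≤ a n} :=
  syndetic_of_uniform_cesaro_lower_bound_general a c h
end

section
/- Let X = 𝕋^m, let α ∈ ℝ be irrational, and let p₀ ∈ ℤ[t] with deg p₀ ≥ 1, and let q̃ ∈ ℝ[t]^m, β₁ ∈ ℝ^m, β₂ ∈ ℝ^l, p̃ ∈ ℝ[t]^l with deg(β₂·p̃) < deg p₀. Then the real polynomial φ(t) = p₀(t)·α + p₀(t)²·(β₁·q̃(t)) + β₂·p̃(t) has at least one irrational coefficient in a degree ≥ 1 term, and consequently (1/N) Σ_{n=1}^{N} e(c + φ(n)) → 0 as N → ∞ for any constant c ∈ ℝ. -/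
/-!
Coefficients: pick a `ℚ`-linear functional `L : ℝ → ℚ` that vanishes on `ℚ` and not at `α`.
Applied coefficientwise, `L` sends `φ = f α + f² g + h` (with `f = p₀`) to
`f · (L α + f · L g) + L h ∈ ℚ[X]`, whose degree is at least `deg f ≥ 1` because
`deg (L h) < deg f`. Its top coefficient is `L` of a coefficient of `φ` of positive degree, and
`L` of a rational number is `0`, so that coefficient of `φ` is irrational.

Weyl: when the leading coefficient of `P` is irrational, induct on the degree. The linear case is a
geometric sum; otherwise van der Corput's inequality reduces to the differences
`P(n + δ) - P(n)`, of one degree less and with leading coefficient `δ · deg P` times that of `P`.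
In general write `P = r + ψ` with `r` having rational coefficients and `ψ` of positive degree with
irrational leading coefficient: `e(r(n))` is periodic, with period `q` say, and on each progression `q m + s` the
polynomial `ψ(q m + s)` still has an irrational leading coefficient.
-/

open Polynomial Filter Finset ComplexConjugate Topology FourierTransform

noncomputable def cesaroMean (u : ℕ → ℂ) (N : ℕ) : ℂ := (N : ℂ)⁻¹ * ∑ n ∈ range N, u n

section Cesaro

variable {u : ℕ → ℂ}

lemma norm_cesaroMean (u : ℕ → ℂ) (N : ℕ) : ‖cesaroMean u N‖ = ‖∑ n ∈ range N, u n‖ / N := by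
  rw [cesaroMean, norm_mul, norm_inv, Complex.norm_natCast, inv_mul_eq_div]

lemma cesaroMean_const_mul (c : ℂ) (u : ℕ → ℂ) :
    cesaroMean (fun n => c * u n) = fun N => c * cesaroMean u N := by
  ext N
  simp only [cesaroMean, ← mul_sum, mul_left_comm]

lemma norm_sum_range_le_of_norm_le_one (hu : ∀ n, ‖u n‖ ≤ 1) (N : ℕ) :
    ‖∑ n ∈ range N, u n‖ ≤ N := by
  simpa using norm_sum_le_of_le (range N) fun n _ => hu n

lemma norm_sum_range_sub_sum_range_add_le (hu : ∀ n, ‖u n‖ ≤ 1) (N h : ℕ) :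
    ‖∑ n ∈ range N, u n - ∑ n ∈ range N, u (n + h)‖ ≤ 2 * h := by
  have hsplit : ∑ n ∈ range N, u n - ∑ n ∈ range N, u (n + h) =
      ∑ n ∈ range h, u n - ∑ n ∈ range h, u (n + N) := by
    have h₁ : ∑ n ∈ range (N + h), u n = ∑ n ∈ range h, u n + ∑ n ∈ range N, u (n + h) := by
      rw [add_comm N h, sum_range_add]; simp_rw [add_comm h]
    have h₂ : ∑ n ∈ range (N + h), u n = ∑ n ∈ range N, u n + ∑ n ∈ range h, u (n + N) := by
      rw [sum_range_add]; simp_rw [add_comm N]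
    linear_combination h₁ - h₂
  rw [hsplit, two_mul]
  exact (norm_sub_le _ _).trans (add_le_add (norm_sum_range_le_of_norm_le_one hu h)
    (norm_sum_range_le_of_norm_le_one (fun n => hu _) h))

lemma Filter.Tendsto.cesaroMean_comp_add (hu : ∀ n, ‖u n‖ ≤ 1)
    (h : Tendsto (cesaroMean u) atTop (𝓝 0)) (k : ℕ) :
    Tendsto (cesaroMean fun n => u (n + k)) atTop (𝓝 0) := by
  have hbound : ∀ N : ℕ, ‖cesaroMean (fun n => u (n + k)) N‖ ≤ ‖cesaroMean u N‖ + 2 * k / N := by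
    intro N
    rw [norm_cesaroMean, norm_cesaroMean, ← add_div]
    gcongr
    calc ‖∑ n ∈ range N, u (n + k)‖
        ≤ ‖∑ n ∈ range N, u n‖ + ‖∑ n ∈ range N, u n - ∑ n ∈ range N, u (n + k)‖ :=
          norm_le_norm_add_norm_sub _ _
      _ ≤ _ := by gcongr; exact norm_sum_range_sub_sum_range_add_le hu N k
  refine squeeze_zero_norm hbound ?_
  simpa using h.norm.add (tendsto_const_div_atTop_nhds_zero_nat (2 * k : ℝ))

lemma tendsto_cesaroMean_zero_of_norm_sum_le {C : ℝ} (h : ∀ N, ‖∑ n ∈ range N, u n‖ ≤ C) :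
    Tendsto (cesaroMean u) atTop (𝓝 0) := by
  refine squeeze_zero_norm (fun N => ?_) (tendsto_const_div_atTop_nhds_zero_nat C)
  rw [norm_cesaroMean]
  exact div_le_div_of_nonneg_right (h N) N.cast_nonneg

lemma tendsto_cesaroMean_pow {z : ℂ} (hz : ‖z‖ = 1) (hz1 : z ≠ 1) :
    Tendsto (cesaroMean (z ^ ·)) atTop (𝓝 0) := by
  refine tendsto_cesaroMean_zero_of_norm_sum_le (C := 2 / ‖z - 1‖) fun N => ?_
  rw [geom_sum_eq hz1, norm_div]
  gcongr
  calc ‖z ^ N - 1‖ ≤ ‖z ^ N‖ + ‖(1 : ℂ)‖ := norm_sub_le _ _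
    _ = 2 := by rw [norm_pow, hz]; norm_num

end Cesaro

section VanDerCorput

variable {u : ℕ → ℂ}

lemma norm_sum_sq_le_card_mul_sum_norm_sq {ι : Type*} (s : Finset ι) (f : ι → ℂ) :
    ‖∑ i ∈ s, f i‖ ^ 2 ≤ #s * ∑ i ∈ s, ‖f i‖ ^ 2 :=
  (pow_le_pow_left₀ (norm_nonneg _) (norm_sum_le _ _) 2).trans (sq_sum_le_card_mul_sum_sq ..)

lemma norm_natCast_mul_sum_sub_sum_window_le (hu : ∀ n, ‖u n‖ ≤ 1) (N H : ℕ) :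
    ‖(H : ℂ) * ∑ n ∈ range N, u n - ∑ n ∈ range N, ∑ h ∈ range H, u (n + h)‖ ≤ 2 * H ^ 2 := by
  have hsum : (H : ℂ) * ∑ n ∈ range N, u n - ∑ n ∈ range N, ∑ h ∈ range H, u (n + h) =
      ∑ h ∈ range H, (∑ n ∈ range N, u n - ∑ n ∈ range N, u (n + h)) := by
    rw [sum_sub_distrib, sum_const, card_range, nsmul_eq_mul, sum_comm]
  rw [hsum]
  calc _ ≤ ∑ _h ∈ range H, (2 * H : ℝ) := norm_sum_le_of_le _ fun h hh =>
        (norm_sum_range_sub_sum_range_add_le hu N h).trans (by gcongr; exact (mem_range.1 hh).le)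
    _ = 2 * H ^ 2 := by simp only [sum_const, card_range, nsmul_eq_mul]; ring

lemma norm_sum_mul_conj_le_of_le (hu : ∀ n, ‖u n‖ ≤ 1) {h h' : ℕ} (hh' : h' ≤ h) (N : ℕ) :
    ‖∑ n ∈ range N, u (n + h) * conj (u (n + h'))‖ ≤
      ‖∑ n ∈ range N, u (n + (h - h')) * conj (u n)‖ + 2 * h' := by
  set w : ℕ → ℂ := fun n => u (n + (h - h')) * conj (u n)
  have hw : ∀ n, ‖w n‖ ≤ 1 := fun n => by
    simpa [w] using mul_le_one₀ (hu _) (norm_nonneg _) (hu n)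
  have hshift : ∑ n ∈ range N, u (n + h) * conj (u (n + h')) = ∑ n ∈ range N, w (n + h') :=
    sum_congr rfl fun n _ => by simp only [w]; congr 2; omega
  rw [hshift]
  exact (norm_le_norm_add_norm_sub _ _).trans
    (add_le_add_right (norm_sum_range_sub_sum_range_add_le hw N h') _)

lemma norm_sum_mul_conj_le_sum_correlations (hu : ∀ n, ‖u n‖ ≤ 1) {H h h' : ℕ} (hh : h < H)
    (hh' : h' < H) (hne : h ≠ h') (N : ℕ) :
    ‖∑ n ∈ range N, u (n + h) * conj (u (n + h'))‖ ≤
      ∑ δ ∈ Ico 1 H, ‖∑ n ∈ range N, u (n + δ) * conj (u n)‖ + 2 * H := by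
  have hcorr : ∀ {a b}, b < a → a < H →
      ‖∑ n ∈ range N, u (n + a) * conj (u (n + b))‖ ≤
        ∑ δ ∈ Ico 1 H, ‖∑ n ∈ range N, u (n + δ) * conj (u n)‖ + 2 * H := by
    intro a b hba haH
    refine (norm_sum_mul_conj_le_of_le hu hba.le N).trans (add_le_add ?_ ?_)
    · exact single_le_sum (f := fun δ => ‖∑ n ∈ range N, u (n + δ) * conj (u n)‖)
        (fun _ _ => norm_nonneg _) (mem_Ico.2 ⟨by omega, by omega⟩)
    · gcongr; omega
  rcases hne.lt_or_gt with hlt | hgt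
  · have hconj : ∑ n ∈ range N, u (n + h) * conj (u (n + h')) =
        conj (∑ n ∈ range N, u (n + h') * conj (u (n + h))) := by
      simp only [map_sum, map_mul, Complex.conj_conj, mul_comm]
    rw [hconj, Complex.norm_conj]
    exact hcorr hlt hh'
  · exact hcorr hgt hh

lemma sum_norm_window_sq_le (hu : ∀ n, ‖u n‖ ≤ 1) (H N : ℕ) :
    ∑ n ∈ range N, ‖∑ h ∈ range H, u (n + h)‖ ^ 2 ≤
      H * N + H ^ 2 * (∑ δ ∈ Ico 1 H, ‖∑ n ∈ range N, u (n + δ) * conj (u n)‖ + 2 * H) := by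
  set E := ∑ δ ∈ Ico 1 H, ‖∑ n ∈ range N, u (n + δ) * conj (u n)‖
  set S : ℕ → ℕ → ℂ := fun h h' => ∑ n ∈ range N, u (n + h) * conj (u (n + h'))
  have hexpand : ((∑ n ∈ range N, ‖∑ h ∈ range H, u (n + h)‖ ^ 2 : ℝ) : ℂ) =
      ∑ h ∈ range H, ∑ h' ∈ range H, S h h' := by
    push_cast
    simp_rw [← Complex.mul_conj', map_sum, sum_mul_sum, S]
    rw [sum_comm]
    exact sum_congr rfl fun h _ => sum_comm
  have hS : ∀ h ∈ range H, ∀ h' ∈ range H,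
      ‖S h h'‖ ≤ (if h = h' then (N : ℝ) else 0) + (E + 2 * H) := by
    intro h hh h' hh'
    have hE : 0 ≤ E := sum_nonneg fun _ _ => norm_nonneg _
    split_ifs with hhh'
    · subst hhh'
      have : ‖S h h‖ ≤ N := norm_sum_range_le_of_norm_le_one (fun n => by
        simpa using mul_le_one₀ (hu _) (norm_nonneg _) (hu _)) N
      linarith
    · simpa using norm_sum_mul_conj_le_sum_correlations hu (mem_range.1 hh) (mem_range.1 hh') hhh' N
  calc ∑ n ∈ range N, ‖∑ h ∈ range H, u (n + h)‖ ^ 2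
      = ‖∑ h ∈ range H, ∑ h' ∈ range H, S h h'‖ := by
        rw [← hexpand, Complex.norm_of_nonneg (sum_nonneg fun _ _ => sq_nonneg _)]
    _ ≤ ∑ h ∈ range H, ∑ h' ∈ range H, ((if h = h' then (N : ℝ) else 0) + (E + 2 * H)) :=
        (norm_sum_le _ _).trans <| sum_le_sum fun h hh =>
          (norm_sum_le _ _).trans <| sum_le_sum fun h' hh' => hS h hh h' hh'
    _ = H * N + H ^ 2 * (E + 2 * H) := by
        rw [sum_congr rfl fun h hh => by rw [sum_add_distrib, sum_ite_eq, if_pos hh]]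
        simp only [sum_add_distrib, sum_const, card_range, nsmul_eq_mul]
        ring

theorem norm_cesaroMean_le_vanDerCorput (hu : ∀ n, ‖u n‖ ≤ 1) {H : ℕ} (hH : 0 < H) (N : ℕ) :
    ‖cesaroMean u N‖ ≤
      √(1 / H + ∑ δ ∈ Ico 1 H, ‖cesaroMean (fun n => u (n + δ) * conj (u n)) N‖ + 2 * H / N) +
        2 * H / N := by
  rcases N.eq_zero_or_pos with rfl | hN
  · simp [cesaroMean]
  set T := ∑ n ∈ range N, u n
  set V := ∑ n ∈ range N, ∑ h ∈ range H, u (n + h)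
  set E := ∑ δ ∈ Ico 1 H, ‖∑ n ∈ range N, u (n + δ) * conj (u n)‖
  have hHr : (0 : ℝ) < H := by exact_mod_cast hH
  have hNr : (0 : ℝ) < N := by exact_mod_cast hN
  have hT : H * ‖T‖ ≤ ‖V‖ + 2 * H ^ 2 := by
    have := norm_le_norm_add_norm_sub' ((H : ℂ) * T) V
    rw [norm_mul, Complex.norm_natCast] at this
    linarith [norm_natCast_mul_sum_sub_sum_window_le hu N H]
  have hV : ‖V‖ ^ 2 ≤ N * (H * N + H ^ 2 * (E + 2 * H)) := by
    have := norm_sum_sq_le_card_mul_sum_norm_sq (range N) fun n => ∑ h ∈ range H, u (n + h)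
    rw [card_range] at this
    exact this.trans (by gcongr; exact sum_norm_window_sq_le hu H N)
  have hmeans : ∑ δ ∈ Ico 1 H, ‖cesaroMean (fun n => u (n + δ) * conj (u n)) N‖ = E / N := by
    simp only [norm_cesaroMean, E, sum_div]
  have hVsqrt : ‖V‖ / (H * N) ≤ √(1 / H + E / N + 2 * H / N) := by
    rw [Real.le_sqrt (by positivity) (by positivity), div_pow]
    calc ‖V‖ ^ 2 / (H * N) ^ 2 ≤ N * (H * N + H ^ 2 * (E + 2 * H)) / (H * N) ^ 2 := by gcongr
      _ = 1 / H + E / N + 2 * H / N := by field_simp; ring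
  rw [norm_cesaroMean, hmeans]
  calc ‖T‖ / N ≤ (‖V‖ + 2 * H ^ 2) / (H * N) := by
        rw [div_le_div_iff₀ hNr (by positivity)]; nlinarith
    _ = ‖V‖ / (H * N) + 2 * H / N := by field_simp
    _ ≤ _ := by gcongr

theorem tendsto_cesaroMean_zero_of_tendsto_correlations (hu : ∀ n, ‖u n‖ ≤ 1)
    (hcorr : ∀ δ, 0 < δ → Tendsto (cesaroMean fun n => u (n + δ) * conj (u n)) atTop (𝓝 0)) :
    Tendsto (cesaroMean u) atTop (𝓝 0) := by
  rw [NormedAddGroup.tendsto_nhds_zero]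
  intro ε hε
  obtain ⟨K, hK⟩ := exists_nat_one_div_lt (pow_pos hε 2)
  set H := K + 1
  have hbound : Tendsto (fun N : ℕ =>
      √(1 / H + ∑ δ ∈ Ico 1 H, ‖cesaroMean (fun n => u (n + δ) * conj (u n)) N‖ + 2 * H / N) +
        2 * H / N) atTop (𝓝 (√(1 / H + 0 + 0) + 0)) := by
    have hdecay := tendsto_const_div_atTop_nhds_zero_nat (2 * H : ℝ)
    refine (((tendsto_const_nhds.add ?_).add hdecay).sqrt).add hdecay
    simpa using tendsto_finsetSum (Ico 1 H) fun δ hδ => (hcorr δ (mem_Ico.1 hδ).1).norm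
  have hlim : √(1 / H + 0 + 0) + 0 < ε := by
    rw [add_zero, add_zero, add_zero, Real.sqrt_lt' hε]
    exact_mod_cast hK
  filter_upwards [hbound.eventually_lt_const hlim] with N hN
  exact (norm_cesaroMean_le_vanDerCorput hu K.succ_pos N).trans_lt hN

end VanDerCorput

lemma sum_range_mul_eq_sum_sum_progressions {A : Type*} [AddCommMonoid A] (u : ℕ → A)
    (q K : ℕ) : ∑ n ∈ range (q * K), u n = ∑ s ∈ range q, ∑ m ∈ range K, u (q * m + s) := by
  induction K with
  | zero => simp
  | succ K ih =>
    rw [mul_add_one, sum_range_add, ih, ← sum_add_distrib]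
    exact sum_congr rfl fun s _ => (sum_range_succ _ K).symm

section Progressions

variable {u : ℕ → ℂ}

lemma norm_cesaroMean_le_sum_progressions (hu : ∀ n, ‖u n‖ ≤ 1) {q : ℕ} (hq : 0 < q) (N : ℕ) :
    ‖cesaroMean u N‖ ≤
      ∑ s ∈ range q, ‖cesaroMean (fun m => u (q * m + s)) (N / q)‖ + q / N := by
  rw [norm_cesaroMean]
  set M := N / q
  have hsplit : ∑ n ∈ range N, u n =
      ∑ s ∈ range q, ∑ m ∈ range M, u (q * m + s) + ∑ i ∈ range (N % q), u (q * M + i) := by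
    rw [← sum_range_mul_eq_sum_sum_progressions, ← sum_range_add, Nat.div_add_mod]
  have hrem : ‖∑ i ∈ range (N % q), u (q * M + i)‖ ≤ q :=
    (norm_sum_range_le_of_norm_le_one (fun i => hu _) _).trans (by exact_mod_cast (N.mod_lt hq).le)
  have hprog : ∀ s, ‖∑ m ∈ range M, u (q * m + s)‖ / N ≤ ‖∑ m ∈ range M, u (q * m + s)‖ / M := by
    intro s
    rcases M.eq_zero_or_pos with hM | hM
    · simp [hM]
    · exact div_le_div_of_nonneg_left (norm_nonneg _) (by exact_mod_cast hM)
        (by exact_mod_cast N.div_le_self q)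
  calc ‖∑ n ∈ range N, u n‖ / N
      ≤ (∑ s ∈ range q, ‖∑ m ∈ range M, u (q * m + s)‖ + q) / N := by
        rw [hsplit]
        gcongr
        exact (norm_add_le _ _).trans (add_le_add (norm_sum_le _ _) hrem)
    _ ≤ ∑ s ∈ range q, ‖∑ m ∈ range M, u (q * m + s)‖ / M + q / N := by
        rw [add_div, sum_div]
        exact add_le_add_left (sum_le_sum fun s _ => hprog s) _
    _ = _ := by simp only [norm_cesaroMean]

theorem tendsto_cesaroMean_zero_of_progressions (hu : ∀ n, ‖u n‖ ≤ 1) {q : ℕ} (hq : 0 < q)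
    (h : ∀ s < q, Tendsto (cesaroMean fun m => u (q * m + s)) atTop (𝓝 0)) :
    Tendsto (cesaroMean u) atTop (𝓝 0) := by
  refine squeeze_zero_norm (norm_cesaroMean_le_sum_progressions hu hq) ?_
  have hmeans : Tendsto (fun N => ∑ s ∈ range q, ‖cesaroMean (fun m => u (q * m + s)) (N / q)‖)
      atTop (𝓝 0) := by
    simpa using tendsto_finsetSum (range q) fun s hs =>
      ((h s (mem_range.1 hs)).norm.comp (Nat.tendsto_div_const_atTop hq.ne'))
  simpa using hmeans.add (tendsto_const_div_atTop_nhds_zero_nat (q : ℝ))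

end Progressions

section Differencing

variable {R : Type*} [CommRing R]

lemma natDegree_taylor_sub_self_le {P : R[X]} {d : ℕ} (hP : P.natDegree = d + 1) (r : R) :
    (taylor r P - P).natDegree ≤ d := by
  have hle : (taylor r P - P).natDegree ≤ d + 1 :=
    (natDegree_sub_le _ _).trans (by rw [natDegree_taylor, hP, max_self])
  have htop : (taylor r P - P).coeff (d + 1) = 0 := by
    rw [coeff_sub, ← hP]
    nth_rewrite 1 [← natDegree_taylor P r]
    rw [coeff_natDegree, coeff_natDegree, leadingCoeff_taylor, sub_self]
  refine natDegree_le_iff_coeff_eq_zero.2 fun m hm => ?_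
  rcases (Nat.succ_le_of_lt hm).eq_or_lt with rfl | hlt
  · exact htop
  · exact coeff_eq_zero_of_natDegree_lt (hle.trans_lt hlt)

lemma coeff_taylor_sub_self_of_natDegree_eq_succ {P : R[X]} {d : ℕ} (hP : P.natDegree = d + 1)
    (r : R) : (taylor r P - P).coeff d = (d + 1) * r * P.coeff (d + 1) := by
  have hlin : (hasseDeriv d P).natDegree ≤ 1 :=
    (natDegree_hasseDeriv_le P d).trans (by omega)
  rw [coeff_sub, taylor_coeff, eq_X_add_C_of_natDegree_le_one hlin]
  simp only [eval_add, eval_mul, eval_C, eval_X, hasseDeriv_coeff, zero_add, Nat.choose_self,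
    Nat.cast_one, one_mul, add_comm 1 d, Nat.choose_succ_self_right]
  push_cast
  ring

end Differencing

section Weyl

lemma fourierChar_intCast (n : ℤ) : 𝐞 (n : ℝ) = 1 := by
  rw [Real.fourierChar_apply', Circle.exp_two_pi_mul_int]

lemma fourierChar_ne_one_of_irrational {x : ℝ} (hx : Irrational x) : 𝐞 x ≠ 1 := by
  rw [Real.fourierChar_apply', Ne, Circle.exp_eq_one]
  rintro ⟨n, hn⟩
  exact hx.ne_int n (by nlinarith [Real.pi_pos])

lemma fourierChar_mul_conj (a b : ℝ) : (𝐞 a : ℂ) * conj (𝐞 b : ℂ) = 𝐞 (a - b) := by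
  rw [← Circle.coe_inv_eq_conj, ← Circle.coe_mul, AddChar.map_sub_eq_div, div_eq_mul_inv]

lemma norm_fourierChar_le_one (x : ℝ) : ‖(𝐞 x : ℂ)‖ ≤ 1 := (Circle.norm_coe _).le

lemma tendsto_cesaroMean_fourierChar_linear {a b : ℝ} (hb : Irrational b) :
    Tendsto (cesaroMean fun n => (𝐞 (b * n + a) : ℂ)) atTop (𝓝 0) := by
  have hterm : (fun n : ℕ => (𝐞 (b * n + a) : ℂ)) = fun n => 𝐞 a * (𝐞 b : ℂ) ^ n := by
    ext n
    rw [AddChar.map_add_eq_mul, mul_comm b, ← nsmul_eq_mul, AddChar.map_nsmul_eq_pow]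
    push_cast
    ring
  rw [hterm, cesaroMean_const_mul]
  simpa using (tendsto_cesaroMean_pow (Circle.norm_coe _)
    (Circle.coe_eq_one.not.2 (fourierChar_ne_one_of_irrational hb))).const_mul (𝐞 a : ℂ)

theorem tendsto_cesaroMean_fourierChar_eval_of_irrational_leadingCoeff {P : ℝ[X]}
    (hdeg : 1 ≤ P.natDegree) (hP : Irrational P.leadingCoeff) :
    Tendsto (cesaroMean fun n => (𝐞 (P.eval (n : ℝ)) : ℂ)) atTop (𝓝 0) := by
  obtain ⟨d, hd⟩ : ∃ d, P.natDegree = d := ⟨_, rfl⟩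
  rw [hd] at hdeg
  induction d, hdeg using Nat.le_induction generalizing P with
  | base =>
    rw [leadingCoeff, hd] at hP
    rw [eq_X_add_C_of_natDegree_le_one hd.le]
    simpa using tendsto_cesaroMean_fourierChar_linear (a := P.coeff 0) hP
  | succ d _ ih =>
    refine tendsto_cesaroMean_zero_of_tendsto_correlations (fun n => norm_fourierChar_le_one _)
      fun δ hδ => ?_
    set ψ := taylor (δ : ℝ) P - P
    have hψd : ψ.coeff d = ((d + 1) * δ : ℕ) * P.leadingCoeff := by
      rw [coeff_taylor_sub_self_of_natDegree_eq_succ hd, leadingCoeff, hd]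
      push_cast
      ring
    have hψirr : Irrational (ψ.coeff d) := by
      rw [hψd]
      exact hP.natCast_mul (by positivity)
    have hψdeg : ψ.natDegree = d :=
      (natDegree_taylor_sub_self_le hd _).antisymm (le_natDegree_of_ne_zero hψirr.ne_zero)
    have hcorr : (fun n : ℕ => (𝐞 (P.eval ((n + δ : ℕ) : ℝ)) : ℂ) * conj (𝐞 (P.eval (n : ℝ)) : ℂ)) =
        fun n : ℕ => (𝐞 (ψ.eval (n : ℝ)) : ℂ) := by
      ext n
      rw [fourierChar_mul_conj, eval_sub, taylor_eval]
      push_cast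
      rfl
    rw [hcorr]
    exact ih (by rwa [Polynomial.leadingCoeff, hψdeg]) hψdeg

lemma exists_pos_periodic_fourierChar_eval_map_rat (r : ℚ[X]) :
    ∃ q : ℕ, 0 < q ∧
      Function.Periodic (fun n : ℕ => 𝐞 ((r.map (algebraMap ℚ ℝ)).eval (n : ℝ))) q := by
  induction r using Polynomial.induction_on' with
  | add r₁ r₂ h₁ h₂ =>
    obtain ⟨q₁, hq₁, hper₁⟩ := h₁
    obtain ⟨q₂, hq₂, hper₂⟩ := h₂
    refine ⟨q₁ * q₂, mul_pos hq₁ hq₂, ?_⟩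
    have hprod : (fun n : ℕ => 𝐞 (((r₁ + r₂).map (algebraMap ℚ ℝ)).eval (n : ℝ))) =
        (fun n : ℕ => 𝐞 ((r₁.map (algebraMap ℚ ℝ)).eval (n : ℝ))) *
          fun n : ℕ => 𝐞 ((r₂.map (algebraMap ℚ ℝ)).eval (n : ℝ)) := by
      ext1 n
      simp only [Polynomial.map_add, eval_add, AddChar.map_add_eq_mul, Pi.mul_apply]
    rw [hprod]
    exact (mul_comm q₂ q₁ ▸ hper₁.nat_mul q₂).mul (hper₂.nat_mul q₁)
  | monomial k a =>
    refine ⟨a.den, a.den_pos, fun n => ?_⟩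
    obtain ⟨t, ht⟩ := sub_dvd_pow_sub_pow ((n : ℤ) + a.den) n k
    have hshift : (a : ℝ) * ((n + a.den : ℕ) : ℝ) ^ k = a * (n : ℝ) ^ k + (a.num * t : ℤ) := by
      have ht' : ((n : ℝ) + a.den) ^ k - (n : ℝ) ^ k = a.den * t := by
        exact_mod_cast (add_sub_cancel_left (n : ℤ) a.den) ▸ ht
      have hnum : (a.num : ℝ) = a * a.den := by exact_mod_cast (Rat.mul_den_eq_num a).symm
      push_cast
      rw [hnum]
      linear_combination (a : ℝ) * ht'
    simp only [map_monomial, eval_monomial, eq_ratCast]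
    rw [hshift, AddChar.map_add_eq_mul, fourierChar_intCast, mul_one]

lemma exists_eq_map_rat_add_irrational_leadingCoeff {P : ℝ[X]} {k : ℕ} (hk : 1 ≤ k)
    (hP : Irrational (P.coeff k)) :
    ∃ (r : ℚ[X]) (ψ : ℝ[X]), P = r.map (algebraMap ℚ ℝ) + ψ ∧ 1 ≤ ψ.natDegree ∧
      Irrational ψ.leadingCoeff := by
  induction hD : P.natDegree using Nat.strong_induction_on generalizing P with
  | _ D ih =>
    by_cases hlead : Irrational P.leadingCoeff
    · exact ⟨0, P, by simp, hk.trans (le_natDegree_of_ne_zero hP.ne_zero), hlead⟩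
    obtain ⟨a, ha⟩ : P.leadingCoeff ∈ Set.range ((↑) : ℚ → ℝ) := not_not.1 hlead
    have hkD : k ≠ P.natDegree := fun h => hlead (by rwa [leadingCoeff, ← h])
    have hE : Irrational (P.eraseLead.coeff k) := by rwa [eraseLead_coeff_of_ne k hkD]
    have hElt : P.eraseLead.natDegree < D :=
      hD ▸ (eraseLead_natDegree_lt_or_eraseLead_eq_zero P).resolve_right fun h0 =>
        hE.ne_zero (by rw [h0, coeff_zero])
    obtain ⟨r, ψ, hEq, hψ⟩ := ih _ hElt hE rfl
    refine ⟨r + C a * X ^ D, ψ, ?_, hψ⟩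
    rw [← eraseLead_add_C_mul_X_pow P, hEq, hD, ← ha]
    simp only [Polynomial.map_add, Polynomial.map_mul, Polynomial.map_pow, map_C, map_X, eq_ratCast]
    ring

theorem tendsto_cesaroMean_fourierChar_eval {P : ℝ[X]} {k : ℕ} (hk : 1 ≤ k)
    (hP : Irrational (P.coeff k)) :
    Tendsto (cesaroMean fun n => (𝐞 (P.eval (n : ℝ)) : ℂ)) atTop (𝓝 0) := by
  obtain ⟨r, ψ, rfl, hψdeg, hψ⟩ := exists_eq_map_rat_add_irrational_leadingCoeff hk hP
  obtain ⟨q, hq, hper⟩ := exists_pos_periodic_fourierChar_eval_map_rat r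
  refine tendsto_cesaroMean_zero_of_progressions (fun n => norm_fourierChar_le_one _) hq
    fun s _ => ?_
  have hq' : (q : ℝ) ≠ 0 := by exact_mod_cast hq.ne'
  set χ := ψ.comp (C (q : ℝ) * X + C (s : ℝ))
  have hχdeg : χ.natDegree = ψ.natDegree := by
    rw [natDegree_comp, natDegree_linear hq', mul_one]
  have hχ : Irrational χ.leadingCoeff := by
    rw [leadingCoeff_comp (by rw [natDegree_linear hq']; exact one_ne_zero),
      leadingCoeff_linear hq', ← Nat.cast_pow]
    exact hψ.mul_natCast (by positivity)
  have hterm : (fun m : ℕ => (𝐞 ((r.map (algebraMap ℚ ℝ) + ψ).eval ((q * m + s : ℕ) : ℝ)) : ℂ)) =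
      fun m : ℕ => (𝐞 ((r.map (algebraMap ℚ ℝ)).eval (s : ℝ)) : ℂ) * 𝐞 (χ.eval (m : ℝ)) := by
    ext m
    have hr := hper.nat_mul m s
    simp only [Nat.cast_id] at hr
    rw [eval_add, AddChar.map_add_eq_mul, add_comm (q * m), mul_comm q, hr]
    simp only [Circle.coe_mul, χ, eval_comp, eval_add, eval_mul, eval_C, eval_X]
    push_cast
    ring_nf
  rw [hterm, cesaroMean_const_mul]
  simpa using (tendsto_cesaroMean_fourierChar_eval_of_irrational_leadingCoeff
    (hψdeg.trans hχdeg.ge) hχ).const_mul _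

end Weyl

namespace Polynomial

variable {R A : Type*} [CommSemiring R] [Semiring A] [Algebra R A]

noncomputable def mapLinear (L : A →ₗ[R] R) (P : A[X]) : R[X] :=
  ∑ n ∈ P.support, monomial n (L (P.coeff n))

@[simp]
lemma coeff_mapLinear (L : A →ₗ[R] R) (P : A[X]) (n : ℕ) :
    (P.mapLinear L).coeff n = L (P.coeff n) := by
  simp only [mapLinear, finsetSum_coeff, coeff_monomial, sum_ite_eq']
  split_ifs with h
  · rfl
  · rw [notMem_support_iff.1 h, map_zero]

lemma natDegree_mapLinear_le (L : A →ₗ[R] R) (P : A[X]) :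
    (P.mapLinear L).natDegree ≤ P.natDegree :=
  natDegree_le_iff_coeff_eq_zero.2 fun n hn => by
    rw [coeff_mapLinear, coeff_eq_zero_of_natDegree_lt hn, map_zero]

lemma mapLinear_add (L : A →ₗ[R] R) (P Q : A[X]) :
    (P + Q).mapLinear L = P.mapLinear L + Q.mapLinear L := by
  ext n; simp

lemma mapLinear_C (L : A →ₗ[R] R) (a : A) : (C a).mapLinear L = C (L a) := by
  ext n; simp [coeff_C, apply_ite L]

lemma mapLinear_map_mul (L : A →ₗ[R] R) (p : R[X]) (P : A[X]) :
    (p.map (algebraMap R A) * P).mapLinear L = p * P.mapLinear L := by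
  ext n
  simp [coeff_mul, ← Algebra.smul_def]

end Polynomial

section Degree

variable {R : Type*} [CommRing R] [NoZeroDivisors R]

lemma natDegree_le_natDegree_mul_add {f u h : R[X]} (hu : u ≠ 0)
    (hh : h.natDegree < f.natDegree) : f.natDegree ≤ (f * u + h).natDegree := by
  have hf : f ≠ 0 := by rintro rfl; simp at hh
  have hfu : f.natDegree ≤ (f * u).natDegree := by
    rw [natDegree_mul hf hu]; exact Nat.le_add_right _ _
  rwa [natDegree_add_eq_left_of_natDegree_lt (hh.trans_le hfu)]

lemma C_add_mul_ne_zero {f g : R[X]} {c : R} (hc : c ≠ 0) (hf : 1 ≤ f.natDegree) :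
    C c + f * g ≠ 0 := by
  intro h0
  have hdvd : f ∣ C c := ⟨-g, by linear_combination h0⟩
  have := natDegree_le_of_dvd hdvd (C_ne_zero.2 hc)
  rw [natDegree_C] at this
  omega

end Degree

lemma exists_linearMap_rat_ne_zero_of_irrational {α : ℝ} (hα : Irrational α) :
    ∃ L : ℝ →ₗ[ℚ] ℚ, L α ≠ 0 ∧ ∀ q : ℚ, L q = 0 := by
  set p := LinearMap.range (Algebra.linearMap ℚ ℝ)
  have hαp : α ∉ p := fun ⟨q, hq⟩ => hα ⟨q, hq⟩
  obtain ⟨L, hLα, hLp⟩ := p.exists_dual_map_eq_bot_of_notMem hαp inferInstance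
  refine ⟨L, hLα, fun q => ?_⟩
  have : L q ∈ p.map L := Submodule.mem_map_of_mem ⟨q, rfl⟩
  rwa [hLp, Submodule.mem_bot] at this

theorem exists_irrational_coeff_mul_add {f : ℚ[X]} (hf : 1 ≤ f.natDegree) {α : ℝ}
    (hα : Irrational α) (g h : ℝ[X]) (hh : h.natDegree < f.natDegree) :
    ∃ k, 1 ≤ k ∧ Irrational
      ((f.map (algebraMap ℚ ℝ) * C α + f.map (algebraMap ℚ ℝ) ^ 2 * g + h).coeff k) := by
  obtain ⟨L, hLα, hLq⟩ := exists_linearMap_rat_ne_zero_of_irrational hα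
  set φ := f.map (algebraMap ℚ ℝ) * C α + f.map (algebraMap ℚ ℝ) ^ 2 * g + h
  have hφ : φ.mapLinear L = f * (C (L α) + f * g.mapLinear L) + h.mapLinear L := by
    simp only [φ, ← Polynomial.map_pow, mapLinear_add, mapLinear_map_mul, mapLinear_C]
    ring
  have hdeg : 1 ≤ (φ.mapLinear L).natDegree := by
    rw [hφ]
    exact hf.trans (natDegree_le_natDegree_mul_add (C_add_mul_ne_zero hLα hf)
      ((natDegree_mapLinear_le L h).trans_lt hh))
  refine ⟨_, hdeg, fun ⟨q, hq⟩ => ?_⟩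
  have hlc : (φ.mapLinear L).coeff (φ.mapLinear L).natDegree ≠ 0 := by
    rw [coeff_natDegree, Ne, leadingCoeff_eq_zero]
    rintro h0
    simp [h0] at hdeg
  rw [coeff_mapLinear, ← hq, hLq] at hlc
  exact hlc rfl

lemma sum_Icc_one_eq_sum_range_add_one {M : Type*} [AddCommMonoid M] (u : ℕ → M) (N : ℕ) :
    ∑ n ∈ Icc 1 N, u n = ∑ n ∈ range N, u (n + 1) := by
  rw [← Ico_add_one_right_eq_Icc, sum_Ico_eq_sum_range, Nat.add_sub_cancel]
  simp only [add_comm 1]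

theorem irrational_coeff_and_weyl_vanishing
    (m l : ℕ) (α : ℝ) (hα : Irrational α)
    (p₀ : Polynomial ℤ) (hp₀ : 1 ≤ p₀.natDegree)
    (qt : Fin m → ℝ[X]) (β₁ : Fin m → ℝ)
    (β₂ : Fin l → ℝ) (pt : Fin l → ℝ[X])
    (hdeg : (∑ i, C (β₂ i) * pt i).natDegree <
      (p₀.map (Int.castRingHom ℝ)).natDegree) :
    (∃ k, 1 ≤ k ∧
      Irrational ((p₀.map (Int.castRingHom ℝ) * C α
        + (p₀.map (Int.castRingHom ℝ)) ^ 2 * (∑ i, C (β₁ i) * qt i)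
        + ∑ i, C (β₂ i) * pt i).coeff k)) ∧
    ∀ c : ℝ, Tendsto (fun N : ℕ => (N : ℂ)⁻¹ *
        ∑ n ∈ Finset.Icc 1 N,
          Complex.exp (2 * Real.pi * Complex.I *
            ((c + (p₀.map (Int.castRingHom ℝ) * C α
              + (p₀.map (Int.castRingHom ℝ)) ^ 2 * (∑ i, C (β₁ i) * qt i)
              + ∑ i, C (β₂ i) * pt i).eval (n : ℝ)) : ℝ)))
      atTop (nhds 0) := by
  have hmap : p₀.map (Int.castRingHom ℝ) = (p₀.map (Int.castRingHom ℚ)).map (algebraMap ℚ ℝ) := by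
    rw [Polynomial.map_map]
    congr 1
  have hp₀ℚ : 1 ≤ (p₀.map (Int.castRingHom ℚ)).natDegree := by
    rwa [natDegree_map_eq_of_injective Int.cast_injective]
  rw [hmap] at hdeg ⊢
  rw [natDegree_map] at hdeg
  have hcoeff := exists_irrational_coeff_mul_add hp₀ℚ hα (∑ i, C (β₁ i) * qt i) _ hdeg
  set φ := (p₀.map (Int.castRingHom ℚ)).map (algebraMap ℚ ℝ) * C α +
    (p₀.map (Int.castRingHom ℚ)).map (algebraMap ℚ ℝ) ^ 2 * (∑ i, C (β₁ i) * qt i) +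
      ∑ i, C (β₂ i) * pt i
  refine ⟨hcoeff, fun c => ?_⟩
  obtain ⟨k, hk, hirr⟩ := hcoeff
  have hweyl := (tendsto_cesaroMean_fourierChar_eval (P := C c + φ) hk
    (by rwa [coeff_add, coeff_C, if_neg (by omega), zero_add])).cesaroMean_comp_add
    (fun n => norm_fourierChar_le_one _) 1
  convert hweyl using 2 with N
  rw [cesaroMean, sum_Icc_one_eq_sum_range_add_one]
  congr 1
  refine sum_congr rfl fun n _ => ?_
  rw [Real.fourierChar_apply, eval_add (p := C c), eval_C]
  push_cast
  ring_nf
end
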